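/- arXiv:math/0605746 — 10 statements merged into one kernel-verified Lean document; each statement's English description precedes it below -/
import Mathlib

section
/- Let s1, ..., sn be positive integers with gcd(s1, ..., sn) = 1 and let d = gcd(s1, ..., s(n-1)). Then g(s1, ..., sn) = d * g(s1/d, ..., s(n-1)/d, sn) + (d-1)*sn. -/
/-!
Write `s = (d t₁, …, d tₙ₋₁, a)` with `gcd (d, a) = 1`, so the numbers representable by `s` are
the `d x + k a` with `x` representable by `t`. Since `a` is invertible mod `d`, the coefficient
`k` of any representation of `m` has a fixed residue `r < d` mod `d`, and trading multiples of
`d a` between the two summands shows that `m` is representable by `s` iff `m ≥ r a` and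
`(m - r a) / d` is representable by `(t, a)`. The largest failure is at `r = d - 1`.
-/

/-- `m` is a nonnegative integer combination of the values of `s`. -/
def Representable {n : ℕ} (s : Fin n → ℕ) (m : ℕ) : Prop :=
  ∃ c : Fin n → ℕ, m = ∑ i, c i * s i

/-- `g` is the Frobenius number of `s`: the largest non-representable integer. -/
def IsFrob {n : ℕ} (s : Fin n → ℕ) (g : ℕ) : Prop :=
  ¬ Representable s g ∧ ∀ m : ℕ, g < m → Representable s m

variable {n : ℕ}

theorem IsFrob.unique {s : Fin n → ℕ} {g h : ℕ} (hg : IsFrob s g) (hh : IsFrob s h) :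
    g = h := by
  by_contra hne
  rcases Nat.lt_or_gt_of_ne hne with hlt | hlt
  · exact hh.1 (hg.2 h hlt)
  · exact hg.1 (hh.2 g hlt)

theorem representable_zero (t : Fin n → ℕ) : Representable t 0 :=
  ⟨0, by simp⟩

theorem representable_snoc_iff {t : Fin n → ℕ} {a m : ℕ} :
    Representable (Fin.snoc t a : Fin (n + 1) → ℕ) m ↔
      ∃ k x, Representable t x ∧ m = x + k * a := by
  constructor
  · rintro ⟨c, rfl⟩
    refine ⟨c (Fin.last n), _, ⟨fun i => c i.castSucc, rfl⟩, ?_⟩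
    simp [Fin.sum_univ_castSucc]
  · rintro ⟨k, x, ⟨c, rfl⟩, rfl⟩
    exact ⟨Fin.snoc c k, by simp [Fin.sum_univ_castSucc]⟩

theorem representable_mul_left_iff {t : Fin n → ℕ} {d m : ℕ} :
    Representable (fun i => d * t i) m ↔ ∃ x, Representable t x ∧ m = d * x := by
  constructor
  · rintro ⟨c, rfl⟩
    refine ⟨_, ⟨c, rfl⟩, ?_⟩
    rw [Finset.mul_sum]
    exact Finset.sum_congr rfl fun i _ => by ring
  · rintro ⟨x, ⟨c, rfl⟩, rfl⟩
    refine ⟨c, ?_⟩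
    rw [Finset.mul_sum]
    exact Finset.sum_congr rfl fun i _ => by ring

theorem representable_snoc_mul_left_iff {t : Fin n → ℕ} {a d m : ℕ} :
    Representable (Fin.snoc (fun i => d * t i) a : Fin (n + 1) → ℕ) m ↔
      ∃ k x, Representable t x ∧ m = d * x + k * a := by
  simp only [representable_snoc_iff, representable_mul_left_iff]
  constructor
  · rintro ⟨k, _, ⟨x, hx, rfl⟩, rfl⟩
    exact ⟨k, x, hx, rfl⟩
  · rintro ⟨k, x, hx, rfl⟩
    exact ⟨k, _, ⟨x, hx, rfl⟩, rfl⟩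

section Coprime

variable {t : Fin n → ℕ} {a d g : ℕ}

theorem representable_snoc_one (t : Fin n → ℕ) (m : ℕ) :
    Representable (Fin.snoc t 1 : Fin (n + 1) → ℕ) m :=
  representable_snoc_iff.mpr ⟨m, 0, representable_zero t, by simp⟩

theorem not_representable_snoc_mul_left (hda : Nat.Coprime d a)
    (hg : ¬ Representable (Fin.snoc t a : Fin (n + 1) → ℕ) g) :
    ¬ Representable (Fin.snoc (fun i => d * t i) a : Fin (n + 1) → ℕ)
      (d * g + (d - 1) * a) := by
  rcases eq_or_ne d 0 with rfl | hd
  · obtain rfl : a = 1 := (Nat.coprime_zero_left a).mp hda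
    exact absurd (representable_snoc_one t g) hg
  rw [representable_snoc_mul_left_iff]
  rintro ⟨k, x, hx, heq⟩
  -- adding `a` to both sides makes the coefficient of `a` on the left a multiple of `d`
  have hshift : d * (g + a) = d * x + (k + 1) * a := by
    have := Nat.sub_one_mul d a
    have : a ≤ d * a := Nat.le_mul_of_pos_left a (Nat.pos_of_ne_zero hd)
    rw [mul_add, add_mul, one_mul]
    omega
  obtain ⟨q, hq⟩ : d ∣ k + 1 :=
    hda.dvd_of_dvd_mul_right ⟨g + a - x, by rw [Nat.mul_sub, hshift]; omega⟩
  have hgq : g + a = x + q * a :=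
    Nat.eq_of_mul_eq_mul_left (Nat.pos_of_ne_zero hd) (by rw [hshift, hq]; ring)
  have hq0 : 0 < q := Nat.pos_of_ne_zero (by rintro rfl; omega)
  refine hg (representable_snoc_iff.mpr ⟨q - 1, x, hx, ?_⟩)
  have := Nat.sub_one_mul q a
  have : a ≤ q * a := Nat.le_mul_of_pos_left a hq0
  omega

theorem representable_snoc_mul_left_of_lt (hda : Nat.Coprime d a)
    (hg : ∀ m, g < m → Representable (Fin.snoc t a : Fin (n + 1) → ℕ) m)
    {m : ℕ} (hm : d * g + (d - 1) * a < m) :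
    Representable (Fin.snoc (fun i => d * t i) a : Fin (n + 1) → ℕ) m := by
  rcases eq_or_ne d 0 with rfl | hd
  · obtain rfl : a = 1 := (Nat.coprime_zero_left a).mp hda
    exact representable_snoc_one _ m
  rw [representable_snoc_mul_left_iff]
  obtain ⟨k, hkd, hk⟩ := Nat.exists_mul_mod_eq_of_coprime m hda.symm hd
  have hka : k * a ≤ (d - 1) * a := Nat.mul_le_mul_right a (by omega)
  obtain ⟨x, hx⟩ : d ∣ m - k * a :=
    (Nat.modEq_iff_dvd' (by omega)).mp (by rw [mul_comm]; exact hk)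
  have hgx : g < x := lt_of_mul_lt_mul_left (a := d) (by omega) (Nat.zero_le d)
  obtain ⟨j, y, hy, rfl⟩ := representable_snoc_iff.mp (hg x hgx)
  exact ⟨d * j + k, y, hy, by rw [← Nat.sub_add_cancel (by omega : k * a ≤ m), hx]; ring⟩

theorem IsFrob.snoc_mul_left (hda : Nat.Coprime d a)
    (hg : IsFrob (Fin.snoc t a : Fin (n + 1) → ℕ) g) :
    IsFrob (Fin.snoc (fun i => d * t i) a : Fin (n + 1) → ℕ) (d * g + (d - 1) * a) :=
  ⟨not_representable_snoc_mul_left hda hg.1,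
    fun _ => representable_snoc_mul_left_of_lt hda hg.2⟩

end Coprime

theorem brauer_shockley_general (n : ℕ) (s : Fin (n + 1) → ℕ)
    (hgcd : Finset.univ.gcd s = 1)
    (d : ℕ) (hd : d = Finset.univ.gcd (fun i : Fin n => s i.castSucc))
    (g g' : ℕ)
    (hg : IsFrob s g)
    (hg' : IsFrob (Fin.snoc (fun i : Fin n => s i.castSucc / d) (s (Fin.last n))) g') :
    g = d * g' + (d - 1) * s (Fin.last n) := by
  have hdvd (i : Fin n) : d ∣ s i.castSucc := hd ▸ Finset.gcd_dvd (Finset.mem_univ i)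
  have hs : s = Fin.snoc (fun i : Fin n => d * (s i.castSucc / d)) (s (Fin.last n)) := by
    ext i
    induction i using Fin.lastCases <;> simp [Nat.mul_div_cancel' (hdvd _)]
  have hda : Nat.Coprime d (s (Fin.last n)) := by
    refine Nat.eq_one_of_dvd_one (hgcd ▸ Finset.dvd_gcd fun i _ => ?_)
    induction i using Fin.lastCases with
    | last => exact Nat.gcd_dvd_right _ _
    | cast i => exact (Nat.gcd_dvd_left _ _).trans (hdvd i)
  rw [hs] at hg
  exact hg.unique (hg'.snoc_mul_left hda)

/-- Brauer–Shockley: with d = gcd(s1,...,s(n-1)),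
g(s1,...,sn) = d * g(s1/d, ..., s(n-1)/d, sn) + (d-1)*sn. -/
theorem brauer_shockley (n : ℕ) (hn : 1 ≤ n) (s : Fin (n + 1) → ℕ)
    (hpos : ∀ i, 0 < s i)
    (hgcd : Finset.univ.gcd s = 1)
    (d : ℕ) (hd : d = Finset.univ.gcd (fun i : Fin n => s i.castSucc))
    (g g' : ℕ)
    (hg : IsFrob s g)
    (hg' : IsFrob (Fin.snoc (fun i : Fin n => s i.castSucc / d) (s (Fin.last n))) g') :
    g = d * g' + (d - 1) * s (Fin.last n) :=
  brauer_shockley_general n s hgcd d hd g g' hg hg'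
end

section
/- For distinct primes p1 < p2 < ... < p(n+1), let P = p1*p2*...*p(n+1) and consider the n+1 integers P/p1, ..., P/p(n+1) (which have gcd 1). The Frobenius number of this set equals n*P - (P/p1 + P/p2 + ... + P/p(n+1)). -/
/-!
Write `P = ∏ qᵢ` for `n + 1` pairwise coprime `qᵢ ≥ 2` and `sᵢ = P / qᵢ`. Modulo `qᵢ` every `sⱼ` with
`j ≠ i` vanishes while `sᵢ` is a unit, so in any representation `m = ∑ dⱼ sⱼ` the coefficient `dᵢ`
is determined modulo `qᵢ`. Choosing the least residues `cᵢ < qᵢ` gives the smallest candidate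
`T = ∑ cᵢ sᵢ ≡ m (mod P)`, and `m` is representable iff `T ≤ m`. Since
`T ≤ ∑ (qᵢ - 1) sᵢ = (n + 1) P - ∑ sᵢ`, every `m > n P - ∑ sᵢ` is representable, while for
`m = n P - ∑ sᵢ ≡ -sᵢ (mod qᵢ)` all `dᵢ ≡ -1` are forced, so `∑ dᵢ sᵢ ≥ (n + 1) P - ∑ sᵢ > m`.
-/

open Finset Function

theorem Representable.add_mul {r : ℕ} {s : Fin r → ℕ} {m : ℕ} (h : Representable s m)
    (k : ℕ) (i : Fin r) : Representable s (m + k * s i) := by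
  obtain ⟨c, rfl⟩ := h
  refine ⟨fun j => c j + if j = i then k else 0, ?_⟩
  simp [Nat.add_mul, sum_add_distrib]

def cofactor {r : ℕ} (q : Fin r → ℕ) (i : Fin r) : ℕ :=
  ∏ j ∈ univ.erase i, q j

section Cofactor

variable {r : ℕ} (q : Fin r → ℕ)

theorem mul_cofactor (i : Fin r) : q i * cofactor q i = ∏ j, q j :=
  mul_prod_erase _ _ (mem_univ i)

theorem sum_mul_self_cofactor : ∑ i, q i * cofactor q i = r * ∏ j, q j := by
  simp only [mul_cofactor, sum_const, card_univ, Fintype.card_fin, smul_eq_mul]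

theorem dvd_cofactor {i j : Fin r} (h : j ≠ i) : q j ∣ cofactor q i :=
  dvd_prod_of_mem _ (mem_erase.2 ⟨h, mem_univ j⟩)

theorem coprime_cofactor (hq : Pairwise (Nat.Coprime on q)) (i : Fin r) :
    (q i).Coprime (cofactor q i) :=
  Nat.Coprime.prod_right fun _ hj => hq (mem_erase.1 hj).1.symm

theorem sum_mul_cofactor_modEq (d : Fin r → ℕ) (i : Fin r) :
    ∑ j, d j * cofactor q j ≡ d i * cofactor q i [MOD q i] := by
  have hrest : q i ∣ ∑ j ∈ univ.erase i, d j * cofactor q j :=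
    dvd_sum fun _ hj => dvd_mul_of_dvd_right (dvd_cofactor q (mem_erase.1 hj).1.symm) _
  rw [← add_sum_erase _ _ (mem_univ i)]
  simpa using (Nat.modEq_zero_iff_dvd.2 hrest).add_left (d i * cofactor q i)

theorem modEq_prod_of_forall_modEq (hq : Pairwise (Nat.Coprime on q)) {a b : ℕ}
    (h : ∀ i, a ≡ b [MOD q i]) : a ≡ b [MOD ∏ i, q i] := by
  rw [← List.prod_ofFn, List.ofFn_eq_map, Nat.modEq_list_map_prod_iff]
  · exact fun i _ => h i
  · exact (List.nodup_finRange r).pairwise_of_forall_ne fun _ _ _ _ hij => hq hij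

end Cofactor

section Frobenius

variable {n : ℕ} {q : Fin (n + 1) → ℕ}

theorem sum_cofactor_le (hq2 : ∀ i, 2 ≤ q i) (hn : 1 ≤ n) :
    ∑ i, cofactor q i ≤ n * ∏ j, q j := by
  have h2 : 2 * ∑ i, cofactor q i ≤ (n + 1) * ∏ j, q j := by
    rw [mul_sum, ← sum_mul_self_cofactor q]
    exact sum_le_sum fun i _ => Nat.mul_le_mul_right _ (hq2 i)
  have h3 : (n + 1) * ∏ j, q j ≤ 2 * (n * ∏ j, q j) := by
    rw [← mul_assoc]
    exact Nat.mul_le_mul_right _ (by omega)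
  omega

theorem not_representable_cofactor (hq : Pairwise (Nat.Coprime on q)) (hpos : ∀ i, 0 < q i)
    (hsum : ∑ i, cofactor q i ≤ n * ∏ j, q j) :
    ¬ Representable (cofactor q) (n * ∏ j, q j - ∑ i, cofactor q i) := by
  rintro ⟨d, hd⟩
  have htotal : ∑ i, (d i + 1) * cofactor q i = n * ∏ j, q j := by
    simp only [add_mul, one_mul, sum_add_distrib]
    omega
  have hdvd (i : Fin (n + 1)) : q i ∣ d i + 1 := by
    refine (coprime_cofactor q hq i).dvd_of_dvd_mul_right
      (((sum_mul_cofactor_modEq q (d + 1) i).dvd_iff dvd_rfl).1 ?_)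
    rw [show ∑ j, (d + 1) j * cofactor q j = n * ∏ j, q j from htotal]
    exact dvd_mul_of_dvd_right (dvd_prod_of_mem q (mem_univ i)) n
  have hle : (n + 1) * ∏ j, q j ≤ n * ∏ j, q j := calc
    (n + 1) * ∏ j, q j = ∑ i, q i * cofactor q i := (sum_mul_self_cofactor q).symm
    _ ≤ ∑ i, (d i + 1) * cofactor q i :=
      sum_le_sum fun i _ => Nat.mul_le_mul_right _ (Nat.le_of_dvd (d i).succ_pos (hdvd i))
    _ = n * ∏ j, q j := htotal
  have hP : 0 < ∏ j, q j := prod_pos fun i _ => hpos i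
  rw [add_mul] at hle
  omega

theorem representable_cofactor_of_lt (hq : Pairwise (Nat.Coprime on q)) (hpos : ∀ i, 0 < q i)
    {m : ℕ}
    (hm : n * ∏ j, q j - ∑ i, cofactor q i < m) : Representable (cofactor q) m := by
  choose c hclt hc using fun i =>
    Nat.exists_mul_mod_eq_of_coprime m (coprime_cofactor q hq i).symm (hpos i).ne'
  set T := ∑ i, c i * cofactor q i
  have hTm : T ≡ m [MOD ∏ j, q j] := modEq_prod_of_forall_modEq q hq fun i =>
    (sum_mul_cofactor_modEq q c i).trans (by rw [mul_comm]; exact hc i)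
  have hTle : T + ∑ i, cofactor q i ≤ (n + 1) * ∏ j, q j := calc
    T + ∑ i, cofactor q i = ∑ i, (c i + 1) * cofactor q i := by
      simp only [T, add_mul, one_mul, sum_add_distrib]
    _ ≤ ∑ i, q i * cofactor q i := sum_le_sum fun i _ => Nat.mul_le_mul_right _ (hclt i)
    _ = (n + 1) * ∏ j, q j := sum_mul_self_cofactor q
  have hTm_le : T ≤ m := hTm.le_of_lt_add (by rw [add_mul] at hTle; omega)
  obtain ⟨k, hk⟩ := (Nat.modEq_iff_dvd' hTm_le).1 hTm
  have hm_eq : m = T + k * q 0 * cofactor q 0 := by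
    rw [mul_assoc, mul_cofactor, mul_comm, ← hk]
    omega
  exact hm_eq ▸ Representable.add_mul ⟨c, rfl⟩ _ 0

theorem isFrob_cofactor (hq : Pairwise (Nat.Coprime on q)) (hq2 : ∀ i, 2 ≤ q i) (hn : 1 ≤ n) :
    IsFrob (cofactor q) (n * ∏ j, q j - ∑ i, cofactor q i) :=
  have hpos i : 0 < q i := (hq2 i).trans_lt' two_pos
  ⟨not_representable_cofactor hq hpos (sum_cofactor_le hq2 hn),
    fun _ => representable_cofactor_of_lt hq hpos⟩

end Frobenius

/-- For distinct primes p1 < ... < p(n+1), with P their product,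
the Frobenius number of {P/p1, ..., P/p(n+1)} is n*P - (P/p1 + ... + P/p(n+1)). -/
theorem frobenius_prime_products (n : ℕ) (hn : 1 ≤ n) (p : Fin (n + 1) → ℕ)
    (hp : ∀ i, Nat.Prime (p i)) (hmono : StrictMono p) :
    IsFrob (fun i => (∏ j, p j) / p i)
      (n * ∏ j, p j - ∑ i, (∏ j, p j) / p i) := by
  have hcofactor : (fun i => (∏ j, p j) / p i) = cofactor p := funext fun i =>
    Nat.div_eq_of_eq_mul_left (hp i).pos (by rw [mul_comm, mul_cofactor])
  have hcoprime : Pairwise (Nat.Coprime on p) := fun i j hij =>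
    (Nat.coprime_primes (hp i) (hp j)).2 (hmono.injective.ne hij)
  rw [hcofactor]
  exact isFrob_cofactor hcoprime (fun i => (hp i).two_le) hn
end

section
/- For distinct primes p < q < r, every integer greater than 2*p*q*r - (p*q + p*r + q*r) is representable as a nonnegative integer combination of q*r, p*r, and p*q. -/
/-!
Reduce `m` modulo each of `a`, `b`, `c`: pick `u < a`, `v < b`, `w < c` with `u * (b * c) ≡ m [MOD a]`,
and so on. Then `s = u * (b * c) + v * (a * c) + w * (a * b)` is congruent to `m` modulo `a * b * c`,
and `s ≤ 3abc - (ab + bc + ca) < m + abc`, so `m - s` is a nonnegative multiple of `abc`, which is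
absorbed into the first coefficient.
-/

namespace Nat

theorem exists_lt_mul_modEq {n a : ℕ} (m : ℕ) (hn : n ≠ 0) (ha : a.Coprime n) :
    ∃ u < n, u * a ≡ m [MOD n] := by
  obtain ⟨u, hu, h⟩ := exists_mul_mod_eq_of_coprime m ha hn
  exact ⟨u, hu, by rwa [mul_comm] at h⟩

theorem exists_eq_add_mul_of_modEq_of_lt {s m n : ℕ} (h : s ≡ m [MOD n]) (hlt : s < m + n) :
    ∃ k, m = s + n * k := by
  rcases le_or_gt s m with hle | hgt
  · obtain ⟨k, hk⟩ := (modEq_iff_dvd' hle).mp h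
    exact ⟨k, by omega⟩
  · have hdvd := (modEq_iff_dvd' hgt.le).mp h.symm
    have := le_of_dvd (by omega) hdvd
    omega

theorem exists_eq_mul_add_mul_add_mul_of_pairwise_coprime {a b c : ℕ}
    (ha : a ≠ 0) (hb : b ≠ 0) (hc : c ≠ 0)
    (hab : a.Coprime b) (hac : a.Coprime c) (hbc : b.Coprime c)
    {m : ℕ} (hm : 2 * a * b * c < m + (a * b + a * c + b * c)) :
    ∃ u v w : ℕ, m = u * (b * c) + v * (a * c) + w * (a * b) := by
  obtain ⟨u, hua, hu⟩ := exists_lt_mul_modEq m ha (hab.symm.mul_left hac.symm)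
  obtain ⟨v, hvb, hv⟩ := exists_lt_mul_modEq m hb (hab.mul_left hbc.symm)
  obtain ⟨w, hwc, hw⟩ := exists_lt_mul_modEq m hc (hac.mul_left hbc)
  set s := u * (b * c) + v * (a * c) + w * (a * b) with hs
  have hsa : s ≡ m [MOD a] := by
    have : s = u * (b * c) + (v * c + w * b) * a := by ring
    rw [this]
    exact (add_mul_mod_self_right _ _ _).trans hu
  have hsb : s ≡ m [MOD b] := by
    have : s = v * (a * c) + (u * c + w * a) * b := by ring
    rw [this]
    exact (add_mul_mod_self_right _ _ _).trans hv
  have hsc : s ≡ m [MOD c] := by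
    have : s = w * (a * b) + (u * b + v * a) * c := by ring
    rw [this]
    exact (add_mul_mod_self_right _ _ _).trans hw
  have hsabc : s ≡ m [MOD a * b * c] :=
    (modEq_and_modEq_iff_modEq_mul (hac.mul_left hbc)).mp
      ⟨(modEq_and_modEq_iff_modEq_mul hab).mp ⟨hsa, hsb⟩, hsc⟩
  have hslt : s < m + a * b * c := by
    have h1 : (u + 1) * (b * c) ≤ a * (b * c) := Nat.mul_le_mul_right _ hua
    have h2 : (v + 1) * (a * c) ≤ b * (a * c) := Nat.mul_le_mul_right _ hvb
    have h3 : (w + 1) * (a * b) ≤ c * (a * b) := Nat.mul_le_mul_right _ hwc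
    nlinarith
  obtain ⟨k, hk⟩ := exists_eq_add_mul_of_modEq_of_lt hsabc hslt
  exact ⟨u + k * a, v, w, by rw [hk, hs]; ring⟩

end Nat

/-- For primes p < q < r, every integer greater than
2pqr - (pq + pr + qr) is a nonnegative integer combination of qr, pr, pq. -/
theorem representable_above_frobenius (p q r : ℕ)
    (hp : Nat.Prime p) (hq : Nat.Prime q) (hr : Nat.Prime r)
    (hpq : p < q) (hqr : q < r) :
    ∀ m : ℕ, 2 * p * q * r - (p * q + p * r + q * r) < m →
      ∃ u v w : ℕ, m = u * (q * r) + v * (p * r) + w * (p * q) := by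
  intro m hm
  exact Nat.exists_eq_mul_add_mul_add_mul_of_pairwise_coprime hp.ne_zero hq.ne_zero hr.ne_zero
    ((Nat.coprime_primes hp hq).mpr hpq.ne) ((Nat.coprime_primes hp hr).mpr (hpq.trans hqr).ne)
    ((Nat.coprime_primes hq hr).mpr hqr.ne) (by omega)
end

section
/- Let q, r, s be positive integers with r < s, gcd(r,s) = 1, and gcd(qs, qr, rs) = 1. Then the Frobenius number g(qs, qr, rs) equals 2*q*r*s - (q*r + q*s + r*s). -/
/-!
Johnson's reduction: if `gcd(d, c) = 1` and `c` lies in the semigroup generated by `a` and `b`,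
then `g(da, db, c) = d·g(a, b) + (d - 1)c`: modulo `d` only the coefficient of `c` matters,
it may be taken in `[0, d)`, and what remains is `d` times a combination of `a` and `b`.
With `d = q`, `(a, b) = (s, r)`, `c = rs` and Sylvester's `g(s, r) = rs - r - s` this gives
`q(rs - r - s) + (q - 1)rs = 2qrs - (qr + qs + rs)`.
-/

/-- `m` is a nonnegative integer combination of `x`, `y`, `z`. -/
def Representable3 (x y z : ℕ) (m : ℤ) : Prop :=
  ∃ u v w : ℕ, m = (u : ℤ) * x + (v : ℤ) * y + (w : ℤ) * z

/-- `g` is the Frobenius number of `{x, y, z}`. -/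
def IsFrob3 (x y z : ℕ) (g : ℤ) : Prop :=
  ¬ Representable3 x y z g ∧ ∀ m : ℤ, g < m → Representable3 x y z m

def Representable2 (x y : ℕ) (m : ℤ) : Prop :=
  ∃ u v : ℕ, m = (u : ℤ) * x + (v : ℤ) * y

def IsFrob2 (x y : ℕ) (g : ℤ) : Prop :=
  ¬ Representable2 x y g ∧ ∀ m : ℤ, g < m → Representable2 x y m

theorem Representable2.add_mul {x y : ℕ} {m n : ℤ} (hm : Representable2 x y m)
    (hn : Representable2 x y n) (k : ℕ) : Representable2 x y (m + k * n) := by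
  obtain ⟨u, v, rfl⟩ := hm
  obtain ⟨u', v', rfl⟩ := hn
  exact ⟨u + k * u', v + k * v', by push_cast; ring⟩

theorem exists_lt_dvd_sub_mul {a d : ℕ} (hd : 0 < d) (h : Nat.Coprime a d) (m : ℤ) :
    ∃ c < d, (d : ℤ) ∣ m - c * a := by
  have : NeZero d := ⟨hd.ne'⟩
  refine ⟨((m : ZMod d) * (a : ZMod d)⁻¹).val, ZMod.val_lt _, ?_⟩
  rw [← ZMod.intCast_zmod_eq_zero_iff_dvd]
  push_cast
  rw [ZMod.natCast_zmod_val, mul_assoc, mul_comm _ (a : ZMod d), ZMod.coe_mul_inv_eq_one a h,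
    mul_one, sub_self]

theorem isFrob2_mul_sub_sub {a b : ℕ} (hb : 0 < b) (hab : Nat.Coprime a b) :
    IsFrob2 a b (a * b - a - b) := by
  have hab' : IsCoprime (a : ℤ) b := Nat.isCoprime_iff_coprime.mpr hab
  constructor
  · rintro ⟨u, v, huv⟩
    have hu : (b : ℤ) ≤ u + 1 := by
      refine Int.le_of_dvd (by positivity) (hab'.symm.dvd_of_dvd_mul_right ⟨a - (v + 1), ?_⟩)
      linear_combination -huv
    have hv : (a : ℤ) ≤ v + 1 := by
      refine Int.le_of_dvd (by positivity) (hab'.dvd_of_dvd_mul_right ⟨b - (u + 1), ?_⟩)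
      linear_combination -huv
    nlinarith
  · intro m hm
    obtain ⟨u, hu, v, hv⟩ := exists_lt_dvd_sub_mul hb hab m
    have hv_nonneg : 0 ≤ v := by
      have : (u : ℤ) ≤ b - 1 := by omega
      nlinarith
    exact ⟨u, v.toNat, by rw [Int.toNat_of_nonneg hv_nonneg]; linarith⟩

theorem isFrob3_mul_mul {a b c d : ℕ} {g : ℤ} (hd : 0 < d) (hcd : Nat.Coprime c d)
    (hg : IsFrob2 a b g) (hc : Representable2 a b c) :
    IsFrob3 (d * a) (d * b) c (d * g + (d - 1) * c) := by
  constructor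
  · rintro ⟨u, v, w, huvw⟩
    -- reducing modulo `d` gives `w ≡ -1`, and `w ≥ 0` then forces `w + 1 = d (j + 1)`
    obtain ⟨k, hk⟩ : (d : ℤ) ∣ w + 1 :=
      (Nat.isCoprime_iff_coprime.mpr hcd).symm.dvd_of_dvd_mul_right
        ⟨g + c - u * a - v * b, by push_cast at huvw; linear_combination -huvw⟩
    have hk_pos : 0 < k :=
      pos_of_mul_pos_right (hk ▸ by positivity : (0 : ℤ) < d * k) (by positivity)
    obtain ⟨j, rfl⟩ : ∃ j : ℕ, k = j + 1 := ⟨(k - 1).toNat, by omega⟩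
    have hg_eq : g = u * a + v * b + (j : ℤ) * c := by
      apply mul_left_cancel₀ (show (d : ℤ) ≠ 0 by positivity)
      push_cast at huvw
      linear_combination huvw + c * hk
    exact hg.1 (hg_eq ▸ Representable2.add_mul ⟨u, v, rfl⟩ hc j)
  · intro m hm
    obtain ⟨w, hw, n, hn⟩ := exists_lt_dvd_sub_mul hd hcd m
    have hgn : g < n := by
      have : (w : ℤ) * c ≤ (d - 1) * c := by gcongr; omega
      nlinarith
    obtain ⟨u, v, huv⟩ := hg.2 n hgn
    exact ⟨u, v, w, by push_cast; linear_combination hn + d * huv⟩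

theorem frobenius_qs_qr_rs_general (q r s : ℕ) (hq : 0 < q) (hr : 0 < r)
    (hco : Nat.gcd r s = 1)
    (hgcd : Nat.gcd (q * s) (Nat.gcd (q * r) (r * s)) = 1) :
    IsFrob3 (q * s) (q * r) (r * s)
      (2 * (q : ℤ) * r * s - ((q : ℤ) * r + (q : ℤ) * s + (r : ℤ) * s)) := by
  have hcop : Nat.Coprime (r * s) q := Nat.dvd_one.mp <| hgcd ▸
    Nat.dvd_gcd (dvd_mul_of_dvd_left (Nat.gcd_dvd_right _ _) s)
      (Nat.dvd_gcd (dvd_mul_of_dvd_left (Nat.gcd_dvd_right _ _) r) (Nat.gcd_dvd_left _ _))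
  have hsylv := isFrob2_mul_sub_sub hr (Nat.coprime_comm.mp hco)
  convert isFrob3_mul_mul hq hcop hsylv ⟨r, 0, by push_cast; ring⟩ using 1
  push_cast
  ring

/-- For positive q, r, s with r < s, gcd(r,s) = 1 and
gcd(qs, qr, rs) = 1, we have g(qs, qr, rs) = 2qrs - (qr + qs + rs). -/
theorem frobenius_qs_qr_rs (q r s : ℕ) (hq : 0 < q) (hr : 0 < r) (hs : 0 < s)
    (hrs : r < s) (hco : Nat.gcd r s = 1)
    (hgcd : Nat.gcd (q * s) (Nat.gcd (q * r) (r * s)) = 1) :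
    IsFrob3 (q * s) (q * r) (r * s)
      (2 * (q : ℤ) * r * s - ((q : ℤ) * r + (q : ℤ) * s + (r : ℤ) * s)) :=
  frobenius_qs_qr_rs_general q r s hq hr hco hgcd
end

section
/- Let p1 < p2 < ... < p(n+1) be primes, and for a subset {i1 < ... < i(k+1)} of {1,...,n+1} let G(i1,...,i(k+1)) denote the Frobenius number of the set {Q/p(i_j) : j = 1,...,k+1} where Q = p(i1)*...*p(i(k+1)). Then for each fixed k, G(n-k+1, ..., n+1) ≥ G(i1, ..., i(k+1)) for every subset of size k+1, i.e., the subset consisting of the k+1 largest primes maximizes the Frobenius number. -/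
/-- `m` is a nonnegative integer combination of the numbers `Q/p i` for `i ∈ S`,
where `Q` is the product of the `p i` over `S`. -/
def RepSub {n : ℕ} (p : Fin n → ℕ) (S : Finset (Fin n)) (m : ℕ) : Prop :=
  ∃ c : Fin n → ℕ, m = ∑ i ∈ S, c i * ((∏ j ∈ S, p j) / p i)

/-- `g` is the Frobenius number of the set `{Q/p i : i ∈ S}`. -/
def IsFrobSub {n : ℕ} (p : Fin n → ℕ) (S : Finset (Fin n)) (g : ℕ) : Prop :=
  ¬ RepSub p S g ∧ ∀ m : ℕ, g < m → RepSub p S m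

/-!
For pairwise coprime `a i` (`i ∈ S`) with product `Q`, a combination `∑ c i * (Q / a i)` is
congruent to `c i * (Q / a i)` modulo `a i`, and `Q / a i` is a unit there. So `m` determines the
coefficients modulo each `a i`, its smallest representation modulo `Q` has all `c i < a i`, and
the Frobenius number is `F S = ∑ (a i - 1) * (Q / a i) - Q`. For `S = insert i E` this equals
`a i * (F E + ∏ E) - ∏ E` with `F E + ∏ E ≥ 0`, so it grows with each `a i`; trading small primes
for larger ones one at a time reaches the `k + 1` largest primes.
-/

open Finset Function

lemma Fin.card_filter_le_val {n m : ℕ} : #{i : Fin n | m ≤ (i : ℕ)} = n - m := by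
  have := card_filter_add_card_filter_not (s := univ) (fun i : Fin n => (i : ℕ) < m)
  simp only [not_lt, Fin.card_filter_val_lt, card_univ, Fintype.card_fin] at this
  omega

section FrobeniusFormula

variable {ι : Type*} [DecidableEq ι] (a : ι → ℕ)

/-- `(#S - 1) * Q - ∑ i ∈ S, Q / a i` with `Q = ∏ i ∈ S, a i`, written without division. -/
def frobeniusFormula (S : Finset ι) : ℤ :=
  ∑ i ∈ S, ((a i : ℤ) - 1) * ∏ j ∈ S.erase i, (a j : ℤ) - ∏ j ∈ S, (a j : ℤ)

variable {a} {S : Finset ι} {i : ι}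

lemma isCoprime_prod_erase (hcop : (S : Set ι).Pairwise (Nat.Coprime on a)) (hi : i ∈ S) :
    IsCoprime (a i : ℤ) (∏ j ∈ S.erase i, (a j : ℤ)) :=
  IsCoprime.prod_right fun _ hj =>
    Nat.isCoprime_iff_coprime.2 (hcop hi (mem_of_mem_erase hj) (ne_of_mem_erase hj).symm)

lemma sum_mul_prod_erase_modEq (c : ι → ℤ) (hi : i ∈ S) :
    ∑ l ∈ S, c l * ∏ j ∈ S.erase l, (a j : ℤ) ≡ c i * ∏ j ∈ S.erase i, (a j : ℤ) [ZMOD a i] := by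
  rw [← add_sum_erase S _ hi]
  conv_rhs => rw [← add_zero (c i * _)]
  refine Int.ModEq.add_left _ (Int.modEq_zero_iff_dvd.2 (dvd_sum fun l hl => ?_))
  exact dvd_mul_of_dvd_right
    (dvd_prod_of_mem _ (mem_erase.2 ⟨(ne_of_mem_erase hl).symm, hi⟩)) _

lemma frobeniusFormula_modEq (hi : i ∈ S) :
    frobeniusFormula a S ≡ -∏ j ∈ S.erase i, (a j : ℤ) [ZMOD a i] := by
  have h := (sum_mul_prod_erase_modEq (a := a) (fun l => (a l : ℤ) - 1) hi).sub_right
    (a i * ∏ j ∈ S.erase i, (a j : ℤ))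
  rw [frobeniusFormula, ← mul_prod_erase S (fun j => (a j : ℤ)) hi]
  convert h using 1
  ring

lemma dvd_add_one_of_sum_mul_prod_erase_eq (hcop : (S : Set ι).Pairwise (Nat.Coprime on a))
    (c : ι → ℤ) (h : ∑ l ∈ S, c l * ∏ j ∈ S.erase l, (a j : ℤ) = frobeniusFormula a S)
    (hi : i ∈ S) : (a i : ℤ) ∣ c i + 1 := by
  have hmod : c i * ∏ j ∈ S.erase i, (a j : ℤ) ≡ -∏ j ∈ S.erase i, (a j : ℤ) [ZMOD a i] :=
    (sum_mul_prod_erase_modEq c hi).symm.trans (h ▸ frobeniusFormula_modEq hi)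
  have hdvd := hmod.symm.dvd
  rw [sub_neg_eq_add, ← add_one_mul] at hdvd
  exact (isCoprime_prod_erase hcop hi).dvd_of_dvd_mul_right hdvd

/-- Mod `a i` the equation forces `c i ≡ -1`, so every coefficient is at least `a i - 1`,
which overshoots the formula by `∏ a`. -/
lemma sum_mul_prod_erase_ne_frobeniusFormula (hpos : ∀ i ∈ S, 0 < a i)
    (hcop : (S : Set ι).Pairwise (Nat.Coprime on a)) (c : ι → ℕ) :
    ∑ l ∈ S, (c l : ℤ) * ∏ j ∈ S.erase l, (a j : ℤ) ≠ frobeniusFormula a S := by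
  intro h
  have hle : ∀ l ∈ S, (a l : ℤ) - 1 ≤ c l := fun l hl => by
    have := Int.le_of_dvd (by positivity) (dvd_add_one_of_sum_mul_prod_erase_eq hcop _ h hl)
    linarith
  have hsum : ∑ l ∈ S, ((a l : ℤ) - 1) * ∏ j ∈ S.erase l, (a j : ℤ)
      ≤ ∑ l ∈ S, (c l : ℤ) * ∏ j ∈ S.erase l, (a j : ℤ) :=
    sum_le_sum fun l hl => mul_le_mul_of_nonneg_right (hle l hl) (by positivity)
  have hQ : 0 < ∏ j ∈ S, (a j : ℤ) := prod_pos fun j hj => by exact_mod_cast hpos j hj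
  rw [frobeniusFormula] at h
  linarith

lemma exists_residues_mul_prod_erase_modEq (hpos : ∀ i ∈ S, 0 < a i)
    (hcop : (S : Set ι).Pairwise (Nat.Coprime on a)) (m : ℕ) :
    ∃ c : ι → ℕ, ∀ i ∈ S, c i < a i ∧ c i * ∏ j ∈ S.erase i, (a j : ℤ) ≡ m [ZMOD a i] := by
  have h : ∀ i, ∃ c : ℕ, i ∈ S → c < a i ∧ c * ∏ j ∈ S.erase i, (a j : ℤ) ≡ m [ZMOD a i] := by
    intro i
    by_cases hi : i ∈ S
    · have hcop_i : Nat.Coprime (∏ j ∈ S.erase i, a j) (a i) := Nat.Coprime.prod_left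
        fun j hj => hcop (mem_of_mem_erase hj) hi (ne_of_mem_erase hj)
      obtain ⟨c, hc, hcm⟩ := Nat.exists_mul_mod_eq_of_coprime m hcop_i (hpos i hi).ne'
      refine ⟨c, fun _ => ⟨hc, ?_⟩⟩
      rw [mul_comm]
      exact_mod_cast Int.natCast_modEq_iff.2 hcm
    · exact ⟨0, fun h => absurd h hi⟩
  choose c hc using h
  exact ⟨c, fun i hi => hc i hi⟩

/-- With residues `c i < a i`, `m - ∑ c i * (Q / a i)` is a multiple of `Q` exceeding `-Q`, hence
nonnegative, and is absorbed into one coefficient. -/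
lemma exists_sum_mul_prod_erase_eq_of_frobeniusFormula_lt (hS : S.Nonempty)
    (hpos : ∀ i ∈ S, 0 < a i) (hcop : (S : Set ι).Pairwise (Nat.Coprime on a)) {m : ℕ}
    (hm : frobeniusFormula a S < m) :
    ∃ c : ι → ℕ, (m : ℤ) = ∑ i ∈ S, (c i : ℤ) * ∏ j ∈ S.erase i, (a j : ℤ) := by
  obtain ⟨c, hc⟩ := exists_residues_mul_prod_erase_modEq hpos hcop m
  have hdvd : ∏ j ∈ S, (a j : ℤ) ∣ m - ∑ l ∈ S, (c l : ℤ) * ∏ j ∈ S.erase l, (a j : ℤ) :=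
    prod_dvd_of_coprime (hcop.mono' fun _ _ h => Nat.isCoprime_iff_coprime.2 h) fun i hi =>
      ((sum_mul_prod_erase_modEq _ hi).trans (hc i hi).2).dvd
  obtain ⟨t, ht⟩ := hdvd
  have hsum : ∑ l ∈ S, (c l : ℤ) * ∏ j ∈ S.erase l, (a j : ℤ)
      ≤ ∑ l ∈ S, ((a l : ℤ) - 1) * ∏ j ∈ S.erase l, (a j : ℤ) :=
    sum_le_sum fun l hl => mul_le_mul_of_nonneg_right
      (by have := (hc l hl).1; omega) (by positivity)
  have hQ : 0 < ∏ j ∈ S, (a j : ℤ) := prod_pos fun j hj => by exact_mod_cast hpos j hj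
  have ht0 : 0 ≤ t := by
    by_contra! ht0
    rw [frobeniusFormula] at hm
    nlinarith
  obtain ⟨i₀, hi₀⟩ := hS
  refine ⟨fun l => c l + if l = i₀ then t.toNat * a i₀ else 0, ?_⟩
  simp only [Nat.cast_add, Nat.cast_ite, Nat.cast_mul, Int.toNat_of_nonneg ht0, Nat.cast_zero,
    add_mul, sum_add_distrib, ite_mul, zero_mul, sum_ite_eq', if_pos hi₀]
  rw [mul_assoc, mul_prod_erase S (fun j => (a j : ℤ)) hi₀]
  linarith

lemma frobeniusFormula_insert {E : Finset ι} (hi : i ∉ E) :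
    frobeniusFormula a (insert i E) =
      a i * (frobeniusFormula a E + ∏ j ∈ E, (a j : ℤ)) - ∏ j ∈ E, (a j : ℤ) := by
  have herase : ∀ l ∈ E, ((a l : ℤ) - 1) * ∏ m ∈ (insert i E).erase l, (a m : ℤ)
      = a i * (((a l : ℤ) - 1) * ∏ m ∈ E.erase l, (a m : ℤ)) := fun l hl => by
    rw [erase_insert_of_ne (ne_of_mem_of_not_mem hl hi).symm,
      prod_insert fun h => hi (mem_of_mem_erase h)]
    ring
  rw [frobeniusFormula, frobeniusFormula, sum_insert hi, erase_insert hi, prod_insert hi,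
    sum_congr rfl herase, ← mul_sum]
  ring

lemma frobeniusFormula_add_prod_nonneg {E : Finset ι} (hpos : ∀ i ∈ E, 0 < a i) :
    0 ≤ frobeniusFormula a E + ∏ j ∈ E, (a j : ℤ) := by
  rw [frobeniusFormula, sub_add_cancel]
  exact sum_nonneg fun l hl => mul_nonneg (by have := hpos l hl; omega) (by positivity)

lemma frobeniusFormula_insert_le_insert {E : Finset ι} {j : ι} (hpos : ∀ l ∈ E, 0 < a l)
    (hi : i ∉ E) (hj : j ∉ E) (hij : a i ≤ a j) :
    frobeniusFormula a (insert i E) ≤ frobeniusFormula a (insert j E) := by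
  rw [frobeniusFormula_insert hi, frobeniusFormula_insert hj]
  gcongr
  exact frobeniusFormula_add_prod_nonneg hpos

lemma frobeniusFormula_le_of_forall_le (hpos : ∀ i, 0 < a i) {T : Finset ι}
    (hcard : S.card = T.card) (hle : ∀ i ∈ S \ T, ∀ j ∈ T \ S, a i ≤ a j) :
    frobeniusFormula a S ≤ frobeniusFormula a T := by
  induction hd : (S \ T).card generalizing S with
  | zero =>
    rw [card_eq_zero, sdiff_eq_empty_iff_subset] at hd
    rw [eq_of_subset_of_card_le hd hcard.ge]
  | succ d ih =>
    obtain ⟨i, hi⟩ : (S \ T).Nonempty := card_pos.1 (by omega)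
    obtain ⟨j, hj⟩ : (T \ S).Nonempty := card_pos.1 (by rw [← card_sdiff_comm hcard]; omega)
    rw [mem_sdiff] at hi hj
    have hjS : j ∉ S.erase i := fun h => hj.2 (mem_of_mem_erase h)
    have hsdiff : insert j (S.erase i) \ T = (S \ T).erase i := by
      clear ih; ext x; simp only [mem_sdiff, mem_insert, mem_erase]; grind
    have hsdiff' : T \ insert j (S.erase i) ⊆ T \ S := by
      clear ih; intro x; simp only [mem_sdiff, mem_insert, mem_erase]; grind
    calc frobeniusFormula a S = frobeniusFormula a (insert i (S.erase i)) := by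
          rw [insert_erase hi.1]
      _ ≤ frobeniusFormula a (insert j (S.erase i)) :=
          frobeniusFormula_insert_le_insert (fun l _ => hpos l) (notMem_erase i S) hjS
            (hle i (mem_sdiff.2 hi) j (mem_sdiff.2 hj))
      _ ≤ frobeniusFormula a T := by
        refine ih ?_ (fun x hx y hy => ?_) ?_
        · rw [card_insert_of_notMem hjS, card_erase_of_mem hi.1, ← hcard,
            Nat.sub_add_cancel (card_pos.2 ⟨i, hi.1⟩)]
        · rw [hsdiff] at hx
          exact hle x (mem_of_mem_erase hx) y (hsdiff' hy)
        · rw [hsdiff, card_erase_of_mem (mem_sdiff.2 hi)]; omega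

end FrobeniusFormula

section RepSub

variable {n : ℕ} {p : Fin n → ℕ} {S : Finset (Fin n)} {m g : ℕ}

lemma repSub_iff (hpos : ∀ i ∈ S, 0 < p i) :
    RepSub p S m ↔ ∃ c : Fin n → ℕ, (m : ℤ) = ∑ i ∈ S, (c i : ℤ) * ∏ j ∈ S.erase i, (p j : ℤ) := by
  have hdiv : ∀ i ∈ S, (∏ j ∈ S, p j) / p i = ∏ j ∈ S.erase i, p j := fun i hi => by
    rw [← mul_prod_erase S p hi, Nat.mul_div_cancel_left _ (hpos i hi)]
  refine exists_congr fun c => ?_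
  rw [sum_congr rfl fun i hi => by rw [hdiv i hi]]
  norm_cast

lemma IsFrobSub.eq_frobeniusFormula (h : IsFrobSub p S g) (hS : S.Nonempty)
    (hpos : ∀ i ∈ S, 0 < p i) (hcop : (S : Set (Fin n)).Pairwise (Nat.Coprime on p)) :
    (g : ℤ) = frobeniusFormula p S := by
  refine le_antisymm (not_lt.1 fun hlt => h.1 ?_) (not_lt.1 fun hlt => ?_)
  · exact (repSub_iff hpos).2 (exists_sum_mul_prod_erase_eq_of_frobeniusFormula_lt hS hpos hcop hlt)
  · obtain ⟨m, hm⟩ := Int.eq_ofNat_of_zero_le (by omega : 0 ≤ frobeniusFormula p S)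
    obtain ⟨c, hc⟩ := (repSub_iff hpos).1 (h.2 m (by omega))
    exact sum_mul_prod_erase_ne_frobeniusFormula hpos hcop c (hc ▸ hm.symm)

end RepSub

theorem frobenius_top_subset_max_general (n : ℕ) (p : Fin (n + 1) → ℕ)
    (hp : ∀ i, Nat.Prime (p i)) (hmono : StrictMono p)
    (k : ℕ) (hkn : k ≤ n)
    (S : Finset (Fin (n + 1))) (hS : S.card = k + 1)
    (g g' : ℕ)
    (hg : IsFrobSub p (Finset.univ.filter (fun i => n - k ≤ i.val)) g)
    (hg' : IsFrobSub p S g') :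
    g' ≤ g := by
  set T : Finset (Fin (n + 1)) := univ.filter (fun i => n - k ≤ i.val)
  have hT : T.card = k + 1 := by rw [Fin.card_filter_le_val]; omega
  have hpos : ∀ i, 0 < p i := fun i => (hp i).pos
  have hcop : ∀ U : Finset (Fin (n + 1)), (U : Set (Fin (n + 1))).Pairwise (Nat.Coprime on p) :=
    fun _ i _ j _ hij => (Nat.coprime_primes (hp i) (hp j)).2 (hmono.injective.ne hij)
  have hle : ∀ i ∈ S \ T, ∀ j ∈ T \ S, p i ≤ p j := by
    intro i hi j hj
    simp only [T, mem_sdiff, mem_filter, mem_univ, true_and] at hi hj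
    exact hmono.monotone (Fin.le_def.2 (by omega))
  have hFS := hg'.eq_frobeniusFormula (card_pos.1 (by omega)) (fun i _ => hpos i) (hcop S)
  have hFT := hg.eq_frobeniusFormula (card_pos.1 (by omega)) (fun i _ => hpos i) (hcop T)
  have := frobeniusFormula_le_of_forall_le hpos (hS.trans hT.symm) hle
  omega

/-- among all (k+1)-subsets of the primes p1 < ... < p(n+1),
the subset of the k+1 largest primes maximizes the Frobenius number of
the associated set {Q/p(i_j)}. -/
theorem frobenius_top_subset_max (n : ℕ) (hn : 1 ≤ n) (p : Fin (n + 1) → ℕ)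
    (hp : ∀ i, Nat.Prime (p i)) (hmono : StrictMono p)
    (k : ℕ) (hk1 : 1 ≤ k) (hkn : k ≤ n)
    (S : Finset (Fin (n + 1))) (hS : S.card = k + 1)
    (g g' : ℕ)
    (hg : IsFrobSub p (Finset.univ.filter (fun i => n - k ≤ i.val)) g)
    (hg' : IsFrobSub p S g') :
    g' ≤ g :=
  frobenius_top_subset_max_general n p hp hmono k hkn S hS g g' hg hg'
end

section
/- Let p1 < ... < p(n+1) be primes and for 1 ≤ k ≤ n let G_k be the Frobenius number of {R/p(n-k+1+j) : j = 0,...,k} where R = p(n-k+1)*...*p(n+1). Then G_(k+1) > G_k for all 1 ≤ k ≤ n-1; in particular the maximum over all k is attained at k = n. -/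
/-!
Write `q` for the prime added when passing from `k` to `k + 1` and `Q` for the product of the
primes already present. The new generators are `q · (Q / pᵢ)` together with `Q`, so a
representation of `q * g + (q - 1) * Q` reads `a * Q + q * T` with `T` representable by the old
generators. Since `q` is coprime to `Q`, comparing the two modulo `q` forces `a + 1 = q * s` with
`s ≥ 1`, and then `g = (s - 1) * Q + T` would be representable. Hence the new Frobenius number is
at least `q * g + (q - 1) * Q > g`.
-/

namespace RepSub

variable {n : ℕ} {p : Fin n → ℕ} {S : Finset (Fin n)}

theorem add {a b : ℕ} (ha : RepSub p S a) (hb : RepSub p S b) : RepSub p S (a + b) := by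
  obtain ⟨c, rfl⟩ := ha
  obtain ⟨d, rfl⟩ := hb
  exact ⟨c + d, by simp only [Pi.add_apply, add_mul, Finset.sum_add_distrib]⟩

theorem mul_prod {j : Fin n} (hj : j ∈ S) (a : ℕ) : RepSub p S (a * ∏ i ∈ S, p i) := by
  refine ⟨Pi.single j (a * p j), ?_⟩
  rw [Finset.sum_eq_single j (fun i _ hij => by simp [hij]) (absurd hj), Pi.single_eq_same,
    mul_assoc, Nat.mul_div_cancel' (Finset.dvd_prod_of_mem p hj)]

theorem exists_of_insert {i : Fin n} (hi : i ∉ S) (hpi : 0 < p i) {m : ℕ}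
    (hm : RepSub p (insert i S) m) :
    ∃ a T, RepSub p S T ∧ m = a * ∏ j ∈ S, p j + p i * T := by
  obtain ⟨c, rfl⟩ := hm
  refine ⟨c i, ∑ j ∈ S, c j * ((∏ l ∈ S, p l) / p j), ⟨c, rfl⟩, ?_⟩
  rw [Finset.sum_insert hi, Finset.prod_insert hi, Nat.mul_div_cancel_left _ hpi,
    Finset.mul_sum]
  congr 1
  refine Finset.sum_congr rfl fun j hj => ?_
  rw [Nat.mul_div_assoc _ (Finset.dvd_prod_of_mem p hj)]
  ring

end RepSub

theorem Nat.exists_eq_mul_add_of_mul_add_eq {q Q a T g : ℕ} (hq : 0 < q) (hqQ : q.Coprime Q)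
    (h : a * Q + q * T = q * g + (q - 1) * Q) : ∃ s, g = s * Q + T := by
  have hsum : (a + 1) * Q + q * T = q * (g + Q) := by
    obtain ⟨r, rfl⟩ := Nat.exists_eq_add_of_lt hq
    simp only [Nat.add_sub_cancel] at h
    linear_combination h
  obtain ⟨s, hs⟩ : q ∣ a + 1 :=
    hqQ.dvd_of_dvd_mul_right <| (Nat.dvd_add_left (dvd_mul_right q T)).mp ⟨_, hsum⟩
  obtain ⟨s, rfl⟩ : ∃ s', s = s' + 1 := Nat.exists_eq_add_one.mpr <|
    Nat.pos_of_ne_zero fun hs0 => by simp [hs0] at hs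
  refine ⟨s, ?_⟩
  have : q * (s * Q + T + Q) = q * (g + Q) := by rw [← hsum, hs]; ring
  have := Nat.eq_of_mul_eq_mul_left hq this
  omega

theorem not_repSub_insert {n : ℕ} {p : Fin n → ℕ} {S : Finset (Fin n)} {i j : Fin n}
    (hi : i ∉ S) (hj : j ∈ S) (hpi : 0 < p i) (hcop : (p i).Coprime (∏ l ∈ S, p l)) {g : ℕ}
    (hg : ¬ RepSub p S g) :
    ¬ RepSub p (insert i S) (p i * g + (p i - 1) * ∏ l ∈ S, p l) := by
  intro hrep
  obtain ⟨a, T, hT, h⟩ := RepSub.exists_of_insert hi hpi hrep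
  obtain ⟨s, rfl⟩ := Nat.exists_eq_mul_add_of_mul_add_eq hpi hcop h.symm
  exact hg ((RepSub.mul_prod hj s).add hT)

theorem IsFrobSub.lt_of_insert {n : ℕ} {p : Fin n → ℕ} {S : Finset (Fin n)} {i j : Fin n}
    (hi : i ∉ S) (hj : j ∈ S) (hpi : 2 ≤ p i) (hcop : (p i).Coprime (∏ l ∈ S, p l)) {g g' : ℕ}
    (hg : IsFrobSub p S g) (hg' : IsFrobSub p (insert i S) g') : g < g' := by
  set Q := ∏ l ∈ S, p l
  have hQ : Q ≠ 0 := fun h0 => by rw [h0, Nat.coprime_zero_right] at hcop; omega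
  have hle : p i * g + (p i - 1) * Q ≤ g' :=
    not_lt.mp fun hlt => not_repSub_insert hi hj (by omega) hcop hg.1 (hg'.2 _ hlt)
  have hgle : g ≤ p i * g := Nat.le_mul_of_pos_left g (by omega)
  have hpos : 0 < (p i - 1) * Q := Nat.mul_pos (by omega) (Nat.pos_of_ne_zero hQ)
  omega

theorem Fin.filter_le_val_eq_insert {N m : ℕ} (hm : m < N) :
    Finset.univ.filter (fun i : Fin N => m ≤ i.val) =
      insert ⟨m, hm⟩ (Finset.univ.filter (fun i : Fin N => m + 1 ≤ i.val)) := by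
  ext i
  simp only [Finset.mem_filter, Finset.mem_univ, true_and, Finset.mem_insert, Fin.ext_iff]
  omega

theorem Nat.coprime_prod_primes_of_notMem {ι : Type*} {p : ι → ℕ} (hp : ∀ i, (p i).Prime)
    (hinj : Function.Injective p) {S : Finset ι} {i : ι} (hi : i ∉ S) :
    (p i).Coprime (∏ j ∈ S, p j) :=
  Nat.Coprime.prod_right fun j hj =>
    (Nat.coprime_primes (hp i) (hp j)).2 fun h => hi (hinj h ▸ hj)

theorem frobenius_top_strict_mono_general (n : ℕ) (p : Fin (n + 1) → ℕ)
    (hp : ∀ i, Nat.Prime (p i)) (hmono : StrictMono p)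
    (k : ℕ) (hk1 : 1 ≤ k) (hkn : k ≤ n - 1)
    (g g' : ℕ)
    (hg : IsFrobSub p (Finset.univ.filter (fun i => n - k ≤ i.val)) g)
    (hg' : IsFrobSub p (Finset.univ.filter (fun i => n - (k + 1) ≤ i.val)) g') :
    g < g' := by
  have hk : n - (k + 1) + 1 = n - k := by omega
  rw [Fin.filter_le_val_eq_insert (by omega : n - (k + 1) < n + 1), hk] at hg'
  refine hg.lt_of_insert ?_ (j := Fin.last n) ?_ (hp _).two_le
    (Nat.coprime_prod_primes_of_notMem hp hmono.injective ?_) hg'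
  all_goals simp only [Finset.mem_filter, Finset.mem_univ, true_and, Fin.val_last]; omega

/-- letting G_k be the Frobenius number associated to the
top k+1 primes among p1 < ... < p(n+1), we have G_(k+1) > G_k for 1 ≤ k ≤ n-1. -/
theorem frobenius_top_strict_mono (n : ℕ) (hn : 2 ≤ n) (p : Fin (n + 1) → ℕ)
    (hp : ∀ i, Nat.Prime (p i)) (hmono : StrictMono p)
    (k : ℕ) (hk1 : 1 ≤ k) (hkn : k ≤ n - 1)
    (g g' : ℕ)
    (hg : IsFrobSub p (Finset.univ.filter (fun i => n - k ≤ i.val)) g)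
    (hg' : IsFrobSub p (Finset.univ.filter (fun i => n - (k + 1) ≤ i.val)) g') :
    g < g' :=
  frobenius_top_strict_mono_general n p hp hmono k hk1 hkn g g' hg hg'
end

section
/- For coprime positive integers x and y (both ≥ 1), a rectangle (a1 × a2) can be tiled with translated copies of (x × x) and (y × y) squares if and only if: x divides both a1 and a2, or y divides both a1 and a2, or one of a1, a2 is divisible by both x and y and the other is a nonnegative integer combination of x and y. -/
/-!
Sufficiency: the rectangle is cut into strips that are tiled by squares of one size.
Necessity (de Bruijn's weights): give the cell `(i, j)` the weight `ω ^ i * ζ ^ j`, with `ω` and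
`ζ` primitive `x`-th and `y`-th roots of unity. Each `x × x` or `y × y` square has total weight
zero, hence so has the rectangle, whose weight is `(∑ i < a1, ω ^ i) * (∑ j < a2, ζ ^ j)`.
So `x ∣ a1` or `y ∣ a2`, and by symmetry `x ∣ a2` or `y ∣ a1`. In the two mixed cases the
first column of the rectangle is cut by the squares into segments of lengths `x` and `y`.
-/

/-- The `a1 × a2` grid of unit cells is partitioned by axis-aligned translated
copies of bricks from `bricks` placed at integer positions.  A placement
`(x, y, w, h)` covers cells `(i, j)` with `x ≤ i < x + w` and `y ≤ j < y + h`. -/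
def Tiles (bricks : Finset (ℕ × ℕ)) (a1 a2 : ℕ) : Prop :=
  ∃ P : Finset (ℕ × ℕ × ℕ × ℕ),
    (∀ q ∈ P, (q.2.2.1, q.2.2.2) ∈ bricks ∧ q.1 + q.2.2.1 ≤ a1 ∧ q.2.1 + q.2.2.2 ≤ a2) ∧
    (∀ i j : ℕ, i < a1 → j < a2 →
      ∃! q : ℕ × ℕ × ℕ × ℕ, q ∈ P ∧
        q.1 ≤ i ∧ i < q.1 + q.2.2.1 ∧ q.2.1 ≤ j ∧ j < q.2.1 + q.2.2.2)

open Finset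

def cells (q : ℕ × ℕ × ℕ × ℕ) : Finset (ℕ × ℕ) :=
  Ico q.1 (q.1 + q.2.2.1) ×ˢ Ico q.2.1 (q.2.1 + q.2.2.2)

theorem mem_cells {q : ℕ × ℕ × ℕ × ℕ} {c : ℕ × ℕ} :
    c ∈ cells q ↔ q.1 ≤ c.1 ∧ c.1 < q.1 + q.2.2.1 ∧ q.2.1 ≤ c.2 ∧ c.2 < q.2.1 + q.2.2.2 := by
  simp [cells, and_assoc]

def IsTiling (bricks : Finset (ℕ × ℕ)) (a1 a2 : ℕ) (P : Finset (ℕ × ℕ × ℕ × ℕ)) : Prop :=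
  (∀ q ∈ P, (q.2.2.1, q.2.2.2) ∈ bricks ∧ q.1 + q.2.2.1 ≤ a1 ∧ q.2.1 + q.2.2.2 ≤ a2) ∧
    (∀ i j : ℕ, i < a1 → j < a2 →
      ∃! q : ℕ × ℕ × ℕ × ℕ, q ∈ P ∧
        q.1 ≤ i ∧ i < q.1 + q.2.2.1 ∧ q.2.1 ≤ j ∧ j < q.2.1 + q.2.2.2)

theorem tiles_iff_exists_isTiling {b : Finset (ℕ × ℕ)} {a1 a2 : ℕ} :
    Tiles b a1 a2 ↔ ∃ P, IsTiling b a1 a2 P :=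
  Iff.rfl

namespace IsTiling

variable {b : Finset (ℕ × ℕ)} {a1 a2 : ℕ} {P : Finset (ℕ × ℕ × ℕ × ℕ)}

theorem biUnion_cells (hP : IsTiling b a1 a2 P) : P.biUnion cells = range a1 ×ˢ range a2 := by
  ext ⟨i, j⟩
  simp only [mem_biUnion, mem_product, mem_range, mem_cells]
  constructor
  · rintro ⟨q, hq, hc⟩
    have := (hP.1 q hq).2
    omega
  · rintro ⟨hi, hj⟩
    exact (hP.2 i j hi hj).exists

theorem pairwiseDisjoint_cells (hP : IsTiling b a1 a2 P) :
    (P : Set (ℕ × ℕ × ℕ × ℕ)).PairwiseDisjoint cells := by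
  intro q hq r hr hne
  refine disjoint_left.mpr fun c hcq hcr => hne ?_
  rw [mem_cells] at hcq hcr
  have := (hP.1 q hq).2
  exact (hP.2 c.1 c.2 (by omega) (by omega)).unique ⟨hq, hcq⟩ ⟨hr, hcr⟩

theorem sum_mul_sum {R : Type*} [CommSemiring R] (hP : IsTiling b a1 a2 P) (f g : ℕ → R) :
    (∑ i ∈ range a1, f i) * (∑ j ∈ range a2, g j) =
      ∑ q ∈ P, (∑ i ∈ Ico q.1 (q.1 + q.2.2.1), f i) * (∑ j ∈ Ico q.2.1 (q.2.1 + q.2.2.2), g j) := by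
  simp_rw [Finset.sum_mul_sum, ← sum_product' (f := fun i j => f i * g j), ← hP.biUnion_cells,
    sum_biUnion hP.pairwiseDisjoint_cells]
  rfl

end IsTiling

namespace Tiles

variable {b : Finset (ℕ × ℕ)} {a1 a2 : ℕ}

theorem zero_right (b : Finset (ℕ × ℕ)) (a1 : ℕ) : Tiles b a1 0 :=
  ⟨∅, by simp, fun _ _ _ hj => absurd hj (Nat.not_lt_zero _)⟩

theorem of_mem {w h : ℕ} (hb : (w, h) ∈ b) : Tiles b w h :=
  ⟨{(0, 0, w, h)}, by simpa using hb, fun i j hi hj => ⟨(0, 0, w, h), by simp [hi, hj],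
    fun q hq => by simpa using hq.1⟩⟩

theorem add_right {a2' : ℕ} (h : Tiles b a1 a2) (h' : Tiles b a1 a2') :
    Tiles b a1 (a2 + a2') := by
  obtain ⟨P, hPb, hPu⟩ := h
  obtain ⟨Q, hQb, hQu⟩ := h'
  refine ⟨P ∪ Q.image fun q => (q.1, q.2.1 + a2, q.2.2), ?_, fun i j hi hj => ?_⟩
  · simp only [mem_union, mem_image]
    rintro q (hq | ⟨r, hr, rfl⟩)
    · have := hPb q hq
      exact ⟨this.1, this.2.1, by omega⟩
    · have := hQb r hr
      exact ⟨this.1, this.2.1, by dsimp only; omega⟩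
  · by_cases hj2 : j < a2
    · obtain ⟨q, hq, huniq⟩ := hPu i j hi hj2
      refine ⟨q, ⟨mem_union_left _ hq.1, hq.2⟩, ?_⟩
      simp only [mem_union, mem_image]
      rintro r ⟨hr | ⟨s, -, rfl⟩, hc⟩
      · exact huniq r ⟨hr, hc⟩
      · dsimp only at hc
        omega
    · obtain ⟨q, hq, huniq⟩ := hQu i (j - a2) hi (by omega)
      refine ⟨(q.1, q.2.1 + a2, q.2.2), ⟨mem_union_right _ (mem_image_of_mem _ hq.1), by
        dsimp only; omega⟩, ?_⟩
      simp only [mem_union, mem_image]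
      rintro r ⟨hr | ⟨s, hs, rfl⟩, hc⟩
      · have := (hPb r hr).2.2
        omega
      · dsimp only at hc
        rw [huniq s ⟨hs, by omega⟩]

theorem mul_right (h : Tiles b a1 a2) (m : ℕ) : Tiles b a1 (m * a2) := by
  induction m with
  | zero => simpa using zero_right b a1
  | succ m ih => simpa [add_mul] using ih.add_right h

theorem transpose (h : Tiles b a1 a2) : Tiles (b.image Prod.swap) a2 a1 := by
  obtain ⟨P, hPb, hPu⟩ := h
  refine ⟨P.image fun q => (q.2.1, q.1, q.2.2.2, q.2.2.1), ?_, fun i j hi hj => ?_⟩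
  · simp only [mem_image]
    rintro q ⟨r, hr, rfl⟩
    have := hPb r hr
    exact ⟨⟨_, this.1, rfl⟩, this.2.2, this.2.1⟩
  · obtain ⟨q, hq, huniq⟩ := hPu j i hj hi
    refine ⟨(q.2.1, q.1, q.2.2.2, q.2.2.1), ⟨mem_image_of_mem _ hq.1, by dsimp only; omega⟩, ?_⟩
    simp only [mem_image]
    rintro r ⟨⟨s, hs, rfl⟩, hc⟩
    dsimp only at hc
    rw [huniq s ⟨hs, by omega⟩]

theorem mul_left (h : Tiles b a1 a2) (k : ℕ) : Tiles b (k * a1) a2 := by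
  simpa [image_image] using (h.transpose.mul_right k).transpose

theorem of_dvd {w h : ℕ} (hb : (w, h) ∈ b) (hw : w ∣ a1) (hh : h ∣ a2) : Tiles b a1 a2 := by
  obtain ⟨k, rfl⟩ := hw
  obtain ⟨m, rfl⟩ := hh
  rw [mul_comm w, mul_comm h]
  exact ((of_mem hb).mul_left k).mul_right m

end Tiles

theorem IsPrimitiveRoot.geom_sum_eq_zero_iff_dvd {R : Type*} [CommRing R] [IsDomain R] {ω : R}
    {n : ℕ} (hω : IsPrimitiveRoot ω n) (hn : 1 < n) (w : ℕ) :
    ∑ i ∈ range w, ω ^ i = 0 ↔ n ∣ w := by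
  have hω1 : ω - 1 ≠ 0 := sub_ne_zero.mpr (hω.ne_one hn)
  rw [← hω.pow_eq_one_iff_dvd, ← sub_eq_zero (a := ω ^ w), ← geom_sum_mul, mul_eq_zero,
    or_iff_left hω1]

theorem IsPrimitiveRoot.sum_Ico_pow_eq_zero_iff_dvd {R : Type*} [CommRing R] [IsDomain R]
    {ω : R} {n : ℕ} (hω : IsPrimitiveRoot ω n) (hn : 1 < n) (p w : ℕ) :
    ∑ i ∈ Ico p (p + w), ω ^ i = 0 ↔ n ∣ w := by
  simp only [sum_Ico_eq_sum_range, add_tsub_cancel_left, pow_add, ← mul_sum]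
  rw [mul_eq_zero, or_iff_right (pow_ne_zero p (hω.ne_zero (by omega))),
    hω.geom_sum_eq_zero_iff_dvd hn]

theorem Tiles.dvd_or_dvd {b : Finset (ℕ × ℕ)} {a1 a2 x y : ℕ} (hx : 0 < x) (hy : 0 < y)
    (hb : ∀ p ∈ b, x ∣ p.1 ∨ y ∣ p.2) (h : Tiles b a1 a2) : x ∣ a1 ∨ y ∣ a2 := by
  obtain rfl | hx1 := (show 1 ≤ x from hx).eq_or_lt
  · exact .inl (one_dvd a1)
  obtain rfl | hy1 := (show 1 ≤ y from hy).eq_or_lt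
  · exact .inr (one_dvd a2)
  obtain ⟨P, hP⟩ := tiles_iff_exists_isTiling.mp h
  obtain ⟨ω, hω⟩ : ∃ ω : ℂ, IsPrimitiveRoot ω x := ⟨_, Complex.isPrimitiveRoot_exp x hx.ne'⟩
  obtain ⟨ζ, hζ⟩ : ∃ ζ : ℂ, IsPrimitiveRoot ζ y := ⟨_, Complex.isPrimitiveRoot_exp y hy.ne'⟩
  have hsum := hP.sum_mul_sum (fun i => ω ^ i) (fun j => ζ ^ j)
  rw [sum_eq_zero (s := P) fun q hq => ?_] at hsum
  · rcases mul_eq_zero.mp hsum with h0 | h0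
    · exact .inl ((hω.geom_sum_eq_zero_iff_dvd hx1 a1).mp h0)
    · exact .inr ((hζ.geom_sum_eq_zero_iff_dvd hy1 a2).mp h0)
  · rcases hb _ (hP.1 q hq).1 with hdvd | hdvd
    · rw [(hω.sum_Ico_pow_eq_zero_iff_dvd hx1 _ _).mpr hdvd, zero_mul]
    · rw [(hζ.sum_Ico_pow_eq_zero_iff_dvd hy1 _ _).mpr hdvd, mul_zero]

theorem Tiles.mem_closure_heights {b : Finset (ℕ × ℕ)} {a1 a2 : ℕ} (ha1 : 0 < a1)
    (h : Tiles b a1 a2) : a2 ∈ AddSubmonoid.closure (Prod.snd '' (b : Set (ℕ × ℕ))) := by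
  obtain ⟨P, hP⟩ := tiles_iff_exists_isTiling.mp h
  have hsum := hP.sum_mul_sum (fun i => if i = 0 then 1 else 0) (fun _ => 1)
  simp only [sum_ite_eq', mem_range, ha1, if_true, sum_const, card_range, Nat.card_Ico,
    add_tsub_cancel_left, smul_eq_mul, mul_one, one_mul] at hsum
  rw [hsum]
  refine AddSubmonoid.sum_mem _ fun q hq => ?_
  rw [← smul_eq_mul]
  exact AddSubmonoid.nsmul_mem _ (AddSubmonoid.subset_closure
    (Set.mem_image_of_mem Prod.snd (mem_coe.mpr (hP.1 q hq).1))) _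

section Squares

variable {x y a1 a2 : ℕ}

theorem Tiles.transpose_squares (h : Tiles {(x, x), (y, y)} a1 a2) :
    Tiles {(x, x), (y, y)} a2 a1 := by
  simpa using h.transpose

theorem Tiles.exists_eq_add_of_squares (ha1 : 0 < a1) (h : Tiles {(x, x), (y, y)} a1 a2) :
    ∃ u v : ℕ, a2 = u * x + v * y := by
  have := h.mem_closure_heights ha1
  simp only [coe_insert, coe_singleton, Set.image_insert_eq, Set.image_singleton,
    AddSubmonoid.mem_closure_pair, smul_eq_mul] at this
  obtain ⟨u, v, huv⟩ := this
  exact ⟨u, v, huv.symm⟩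

theorem Tiles.squares_add (u v : ℕ) (hx : x ∣ a1) (hy : y ∣ a1) :
    Tiles {(x, x), (y, y)} a1 (u * x + v * y) :=
  (of_dvd (by simp) hx (dvd_mul_left x u)).add_right (of_dvd (by simp) hy (dvd_mul_left y v))

end Squares

theorem fricke_general (x y a1 a2 : ℕ) (hx : 0 < x) (hy : 0 < y)
    (ha1 : 0 < a1) (ha2 : 0 < a2) :
    Tiles {(x, x), (y, y)} a1 a2 ↔
      (x ∣ a1 ∧ x ∣ a2) ∨ (y ∣ a1 ∧ y ∣ a2) ∨
      (x ∣ a1 ∧ y ∣ a1 ∧ ∃ u v : ℕ, a2 = u * x + v * y) ∨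
      (x ∣ a2 ∧ y ∣ a2 ∧ ∃ u v : ℕ, a1 = u * x + v * y) := by
  have hdvd : ∀ p ∈ ({(x, x), (y, y)} : Finset (ℕ × ℕ)), x ∣ p.1 ∨ y ∣ p.2 := by simp
  constructor
  · intro h
    have h' := h.transpose_squares
    rcases h.dvd_or_dvd hx hy hdvd with hx1 | hy2 <;>
      rcases h'.dvd_or_dvd hx hy hdvd with hx2 | hy1
    · exact .inl ⟨hx1, hx2⟩
    · exact .inr (.inr (.inl ⟨hx1, hy1, h.exists_eq_add_of_squares ha1⟩))
    · exact .inr (.inr (.inr ⟨hx2, hy2, h'.exists_eq_add_of_squares ha2⟩))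
    · exact .inr (.inl ⟨hy1, hy2⟩)
  · rintro (⟨hx1, hx2⟩ | ⟨hy1, hy2⟩ | ⟨hx1, hy1, u, v, rfl⟩ | ⟨hx2, hy2, u, v, rfl⟩)
    · exact .of_dvd (by simp) hx1 hx2
    · exact .of_dvd (by simp) hy1 hy2
    · exact .squares_add u v hx1 hy1
    · exact (Tiles.squares_add u v hx2 hy2).transpose_squares

/-- Fricke: characterization of rectangles tileable by
x×x and y×y squares, for coprime x, y. -/
theorem fricke (x y a1 a2 : ℕ) (hx : 0 < x) (hy : 0 < y)
    (hco : Nat.gcd x y = 1) (ha1 : 0 < a1) (ha2 : 0 < a2) :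
    Tiles {(x, x), (y, y)} a1 a2 ↔
      (x ∣ a1 ∧ x ∣ a2) ∨ (y ∣ a1 ∧ y ∣ a2) ∨
      (x ∣ a1 ∧ y ∣ a1 ∧ ∃ u v : ℕ, a2 = u * x + v * y) ∨
      (x ∣ a2 ∧ y ∣ a2 ∧ ∃ u v : ℕ, a1 = u * x + v * y) :=
  fricke_general x y a1 a2 hx hy ha1 ha2
end

section
/- Let a1, a2, p, q, r, s ≥ 2 be integers with r < s, gcd(qs, qr, rs) = 1, and gcd(p,r) = gcd(p,s) = gcd(r,s) = 1. If a1 and a2 are both at least max{2qrs - (qs+qr+rs) + 1, (p-1)(s-1), (r-1)(s-1)}, then the rectangle (a1 × a2) can be tiled with bricks (p × q) and (r × s), where rotations of the (r × s) brick are allowed. -/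
theorem Nat.exists_lt_mul_modEq_s9 {n c : ℕ} (N : ℕ) (hn : n ≠ 0) (hc : c.Coprime n) :
    ∃ x < n, x * c ≡ N [MOD n] := by
  have : NeZero n := ⟨hn⟩
  refine ⟨((N : ZMod n) * (c : ZMod n)⁻¹).val, ZMod.val_lt _, ?_⟩
  rw [← ZMod.natCast_eq_natCast_iff, Nat.cast_mul, ZMod.natCast_zmod_val, mul_assoc,
    mul_comm _ (c : ZMod n), ZMod.coe_mul_inv_eq_one c hc, mul_one]

/-- Every `N > 2qrs - qs - qr - rs` is a nonnegative combination of `qs`, `qr`, `rs`: choose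
`c < q` with `c rs ≡ N (mod q)`; then `(N - c rs) / q` exceeds the Frobenius number `rs - r - s`
of the pair `r, s`. -/
theorem Nat.exists_mul_add_mul_add_mul_eq {q r s N : ℕ} (hr : 1 < r) (hs : 1 < s)
    (hqrs : q.Coprime (r * s)) (hrs : r.Coprime s)
    (hN : 2 * q * r * s < N + q * s + q * r + r * s) :
    ∃ a b c : ℕ, a * (q * s) + b * (q * r) + c * (r * s) = N := by
  have hq : q ≠ 0 := by
    rintro rfl
    rw [Nat.coprime_zero_left] at hqrs
    nlinarith
  obtain ⟨c, hcq, hc⟩ := Nat.exists_lt_mul_modEq_s9 N hq hqrs.symm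
  have hc_le : c * (r * s) + r * s ≤ q * (r * s) := by
    simpa [Nat.succ_mul] using Nat.mul_le_mul_right (r * s) hcq
  have hrs_le : q * (r + s) ≤ q * (r * s) := Nat.mul_le_mul_left q (add_le_mul hr hs)
  have hcN : c * (r * s) ≤ N := by nlinarith
  obtain ⟨M, hM⟩ := (Nat.modEq_iff_dvd' hcN).mp hc
  replace hM : N = c * (r * s) + q * M := by omega
  have hM_gt : r * s < M + r + s := Nat.lt_of_mul_lt_mul_left (a := q) (by nlinarith)
  obtain ⟨b, a, hab⟩ := Nat.exists_add_mul_eq_of_gcd_dvd_of_mul_pred_le r s M (by simp [hrs])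
    (by simp only [Nat.pred_eq_sub_one]
        zify [hr.le, hs.le] at hM_gt ⊢
        nlinarith)
  exact ⟨a, b, c, by rw [hM, ← hab]; ring⟩

namespace Tiles

variable {B : Finset (ℕ × ℕ)} {w h : ℕ}

theorem of_mem_s9 (hB : (w, h) ∈ B) : Tiles B w h := by
  refine ⟨{(0, 0, w, h)}, by simpa using hB, fun i j hi hj => ⟨(0, 0, w, h), ?_, ?_⟩⟩
  · simp [hi, hj]
  · rintro t ⟨ht, -⟩
    simpa using ht

theorem zero_width (B : Finset (ℕ × ℕ)) (h : ℕ) : Tiles B 0 h :=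
  ⟨∅, by simp, fun _ _ hi _ => absurd hi (Nat.not_lt_zero _)⟩

theorem transpose_s9 (ht : Tiles B w h) : Tiles (B.image Prod.swap) h w := by
  obtain ⟨P, hP, hcov⟩ := ht
  let swap : ℕ × ℕ × ℕ × ℕ → ℕ × ℕ × ℕ × ℕ := fun t => (t.2.1, t.1, t.2.2.2, t.2.2.1)
  refine ⟨P.image swap, ?_, fun j i hj hi => ?_⟩
  · simp only [Finset.forall_mem_image]
    intro t ht
    obtain ⟨hB, hw, hh⟩ := hP t ht
    exact ⟨Finset.mem_image_of_mem Prod.swap hB, hh, hw⟩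
  · obtain ⟨t, ⟨ht, hi₁, hi₂, hj₁, hj₂⟩, huniq⟩ := hcov i j hi hj
    refine ⟨swap t, ⟨Finset.mem_image_of_mem swap ht, hj₁, hj₂, hi₁, hi₂⟩, ?_⟩
    rintro _ ⟨ht', hj₁', hj₂', hi₁', hi₂'⟩
    obtain ⟨t', ht'P, rfl⟩ := Finset.mem_image.mp ht'
    rw [huniq t' ⟨ht'P, hi₁', hi₂', hj₁', hj₂'⟩]

theorem transpose_iff : Tiles (B.image Prod.swap) h w ↔ Tiles B w h := by
  refine ⟨fun ht => ?_, transpose_s9⟩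
  simpa [Finset.image_image, Prod.swap_swap_eq] using ht.transpose_s9

theorem add_width {w₁ w₂ : ℕ} (ht₁ : Tiles B w₁ h) (ht₂ : Tiles B w₂ h) :
    Tiles B (w₁ + w₂) h := by
  obtain ⟨P₁, hP₁, hcov₁⟩ := ht₁
  obtain ⟨P₂, hP₂, hcov₂⟩ := ht₂
  let shift : ℕ × ℕ × ℕ × ℕ → ℕ × ℕ × ℕ × ℕ := fun t => (t.1 + w₁, t.2)
  refine ⟨P₁ ∪ P₂.image shift, ?_, fun i j hi hj => ?_⟩
  · simp only [Finset.forall_mem_union, Finset.forall_mem_image]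
    refine ⟨fun t ht => ?_, fun t ht => ?_⟩
    · obtain ⟨hB, hw, hh⟩ := hP₁ t ht
      exact ⟨hB, by omega, hh⟩
    · obtain ⟨hB, hw, hh⟩ := hP₂ t ht
      exact ⟨hB, by simp only [shift]; omega, hh⟩
  rcases lt_or_ge i w₁ with hi₁ | hi₁
  · obtain ⟨t, ⟨ht, hcov⟩, huniq⟩ := hcov₁ i j hi₁ hj
    refine ⟨t, ⟨Finset.mem_union_left _ ht, hcov⟩, ?_⟩
    rintro t' ⟨ht', hcov'⟩
    rcases Finset.mem_union.mp ht' with ht' | ht'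
    · exact huniq t' ⟨ht', hcov'⟩
    · obtain ⟨t₀, -, rfl⟩ := Finset.mem_image.mp ht'
      simp only [shift] at hcov'
      omega
  · obtain ⟨t, ⟨ht, hcov⟩, huniq⟩ := hcov₂ (i - w₁) j (by omega) hj
    refine ⟨shift t, ⟨Finset.mem_union_right _ (Finset.mem_image_of_mem shift ht), ?_⟩, ?_⟩
    · simp only [shift]
      omega
    rintro t' ⟨ht', hcov'⟩
    rcases Finset.mem_union.mp ht' with ht' | ht'
    · have := (hP₁ t' ht').2.1
      omega
    · obtain ⟨t₀, ht₀, rfl⟩ := Finset.mem_image.mp ht'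
      simp only [shift] at hcov'
      rw [huniq t₀ ⟨ht₀, by omega⟩]

theorem add_height {h₁ h₂ : ℕ} (ht₁ : Tiles B w h₁) (ht₂ : Tiles B w h₂) :
    Tiles B w (h₁ + h₂) :=
  transpose_iff.mp (ht₁.transpose_s9.add_width ht₂.transpose_s9)

theorem mul_width (ht : Tiles B w h) : ∀ k : ℕ, Tiles B (k * w) h
  | 0 => by simpa using zero_width B h
  | k + 1 => by simpa [Nat.succ_mul] using (ht.mul_width k).add_width ht

theorem mul_height (ht : Tiles B w h) (k : ℕ) : Tiles B w (k * h) :=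
  transpose_iff.mp (ht.transpose_s9.mul_width k)

theorem of_coprime_widths {w₁ w₂ N : ℕ} (ht₁ : Tiles B w₁ h) (ht₂ : Tiles B w₂ h)
    (hw : w₁.Coprime w₂) (hN : (w₁ - 1) * (w₂ - 1) ≤ N) : Tiles B N h := by
  obtain ⟨α, β, rfl⟩ := Nat.exists_add_mul_eq_of_gcd_dvd_of_mul_pred_le w₁ w₂ N
    (by simp [hw]) (by simpa using hN)
  exact (ht₁.mul_width α).add_width (ht₂.mul_width β)

end Tiles

theorem tiling_pq_rs_general (a1 a2 p q r s : ℕ)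
    (hr : 2 ≤ r) (hs : 2 ≤ s)
    (hrs : r < s)
    (hgcd : Nat.gcd (q * s) (Nat.gcd (q * r) (r * s)) = 1)
    (hpr : Nat.gcd p r = 1) (hps : Nat.gcd p s = 1) (hrs' : Nat.gcd r s = 1)
    (hb1 : max (2 * q * r * s - (q * s + q * r + r * s) + 1)
        (max ((p - 1) * (s - 1)) ((r - 1) * (s - 1))) ≤ a1)
    (hb2 : max (2 * q * r * s - (q * s + q * r + r * s) + 1)
        (max ((p - 1) * (s - 1)) ((r - 1) * (s - 1))) ≤ a2) :
    Tiles {(p, q), (r, s), (s, r)} a1 a2 := by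
  have brick_pq : Tiles {(p, q), (r, s), (s, r)} p q := .of_mem (by simp)
  have brick_rs : Tiles {(p, q), (r, s), (s, r)} r s := .of_mem (by simp)
  have brick_sr : Tiles {(p, q), (r, s), (s, r)} s r := .of_mem (by simp)
  simp only [max_le_iff] at hb1 hb2
  have hq_rs : q.Coprime (r * s) := by
    rwa [← Nat.gcd_assoc, Nat.gcd_mul_left, Nat.gcd_comm s r, hrs', mul_one] at hgcd
  have strip_qs : Tiles _ a1 (q * s) :=
    (mul_comm s q ▸ brick_pq.mul_height s).of_coprime_widths (brick_rs.mul_height q) hpr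
      ((Nat.mul_le_mul_left _ (by omega)).trans hb1.2.1)
  have strip_qr : Tiles _ a1 (q * r) :=
    (mul_comm r q ▸ brick_pq.mul_height r).of_coprime_widths (brick_sr.mul_height q) hps hb1.2.1
  have strip_rs : Tiles _ a1 (r * s) :=
    (brick_rs.mul_height r).of_coprime_widths (mul_comm s r ▸ brick_sr.mul_height s) hrs' hb1.2.2
  obtain ⟨A, B, C, rfl⟩ :=
    Nat.exists_mul_add_mul_add_mul_eq (N := a2) hr hs hq_rs hrs' (by omega)
  exact ((strip_qs.mul_height A).add_height (strip_qr.mul_height B)).add_height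
    (strip_rs.mul_height C)

/-- Corollary 1: sufficient side lengths for tiling with
(p×q) bricks (fixed orientation) and (r×s) bricks (rotations allowed). -/
theorem tiling_pq_rs (a1 a2 p q r s : ℕ)
    (ha1 : 2 ≤ a1) (ha2 : 2 ≤ a2) (hp : 2 ≤ p) (hq : 2 ≤ q) (hr : 2 ≤ r) (hs : 2 ≤ s)
    (hrs : r < s)
    (hgcd : Nat.gcd (q * s) (Nat.gcd (q * r) (r * s)) = 1)
    (hpr : Nat.gcd p r = 1) (hps : Nat.gcd p s = 1) (hrs' : Nat.gcd r s = 1)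
    (hb1 : max (2 * q * r * s - (q * s + q * r + r * s) + 1)
        (max ((p - 1) * (s - 1)) ((r - 1) * (s - 1))) ≤ a1)
    (hb2 : max (2 * q * r * s - (q * s + q * r + r * s) + 1)
        (max ((p - 1) * (s - 1)) ((r - 1) * (s - 1))) ≤ a2) :
    Tiles {(p, q), (r, s), (s, r)} a1 a2 :=
  tiling_pq_rs_general a1 a2 p q r s hr hs hrs hgcd hpr hps hrs' hb1 hb2
end

section
/- Let L, a, b, c, r be positive integers such that b divides r, r = x1*a + x2*c for some nonnegative integers x1, x2, and L*c = y1*a + y2*b for some nonnegative integers y1, y2. Then the square of side r + a*c can be tiled with squares of sides a, b, and c. -/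
open Finset

theorem tiles_mul_mul_of_mem {B : Finset (ℕ × ℕ)} {w h : ℕ} (hB : (w, h) ∈ B) (m n : ℕ) :
    Tiles B (m * w) (n * h) := by
  refine ⟨(range m ×ˢ range n).image fun p => (p.1 * w, p.2 * h, w, h), ?_, ?_⟩
  · simp only [mem_image, mem_product, mem_range, forall_exists_index, and_imp]
    rintro _ ⟨i, j⟩ hi hj rfl
    exact ⟨hB, by nlinarith, by nlinarith⟩
  · intro i j hi hj
    have hw : 0 < w := Nat.pos_of_ne_zero (by rintro rfl; simp at hi)
    have hh : 0 < h := Nat.pos_of_ne_zero (by rintro rfl; simp at hj)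
    refine ⟨(i / w * w, j / h * h, w, h), ⟨?_, ?_⟩, ?_⟩
    · exact mem_image.2 ⟨(i / w, j / h),
        mem_product.2 ⟨mem_range.2 ((Nat.div_lt_iff_lt_mul hw).2 hi),
          mem_range.2 ((Nat.div_lt_iff_lt_mul hh).2 hj)⟩, rfl⟩
    · have := Nat.mod_add_div' i w
      have := Nat.mod_add_div' j h
      have := Nat.mod_lt i hw
      have := Nat.mod_lt j hh
      dsimp only
      omega
    · simp only [mem_image, mem_product, mem_range, and_imp, forall_exists_index]
      rintro _ ⟨p, p'⟩ - - rfl hpi hip hpj hjp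
      have hp : i / w = p := Nat.div_eq_of_lt_le hpi (by rw [Nat.succ_mul]; exact hip)
      have hp' : j / h = p' := Nat.div_eq_of_lt_le hpj (by rw [Nat.succ_mul]; exact hjp)
      rw [hp, hp']

theorem Tiles.transpose_s11 {B : Finset (ℕ × ℕ)} {a1 a2 : ℕ} (h : Tiles B a1 a2) :
    Tiles (B.image Prod.swap) a2 a1 := by
  obtain ⟨P, hP, hU⟩ := h
  let σ : Equiv.Perm (ℕ × ℕ × ℕ × ℕ) :=
    Function.Involutive.toPerm (fun q => (q.2.1, q.1, q.2.2.2, q.2.2.1)) fun _ => rfl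
  refine ⟨P.image σ, ?_, fun i j hi hj => (σ.existsUnique_congr fun q => ?_).1 (hU j i hj hi)⟩
  · simp only [mem_image, forall_exists_index, and_imp]
    rintro _ q hq rfl
    obtain ⟨hb, h1, h2⟩ := hP q hq
    exact ⟨⟨_, hb, rfl⟩, h2, h1⟩
  · rw [σ.injective.mem_finset_image]
    exact and_congr_right fun _ => by
      constructor <;> exact fun ⟨h1, h2, h3, h4⟩ => ⟨h3, h4, h1, h2⟩

theorem Tiles.append_left {B : Finset (ℕ × ℕ)} {a1 a1' a2 : ℕ}
    (h : Tiles B a1 a2) (h' : Tiles B a1' a2) : Tiles B (a1 + a1') a2 := by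
  obtain ⟨P, hP, hU⟩ := h
  obtain ⟨P', hP', hU'⟩ := h'
  refine ⟨P ∪ P'.image fun q => (q.1 + a1, q.2), ?_, ?_⟩
  · simp only [mem_union, mem_image]
    rintro _ (hq | ⟨q, hq, rfl⟩)
    · obtain ⟨hb, h1, h2⟩ := hP _ hq
      exact ⟨hb, by omega, h2⟩
    · obtain ⟨hb, h1, h2⟩ := hP' q hq
      exact ⟨hb, by dsimp only; omega, h2⟩
  · intro i j hi hj
    rcases lt_or_ge i a1 with hi1 | hi1
    · obtain ⟨q, ⟨hq, hcov⟩, huniq⟩ := hU i j hi1 hj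
      refine ⟨q, ⟨mem_union_left _ hq, hcov⟩, ?_⟩
      simp only [mem_union, mem_image]
      rintro _ ⟨hq' | ⟨q', -, rfl⟩, hcov'⟩
      · exact huniq _ ⟨hq', hcov'⟩
      · dsimp only at hcov'
        omega
    · obtain ⟨q, ⟨hq, hcov⟩, huniq⟩ := hU' (i - a1) j (by omega) hj
      refine ⟨(q.1 + a1, q.2), ⟨mem_union_right _ (mem_image_of_mem _ hq), by dsimp only; omega⟩, ?_⟩
      simp only [mem_union, mem_image]
      rintro _ ⟨hq' | ⟨q', hq', rfl⟩, hcov'⟩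
      · have := (hP _ hq').2.1
        omega
      · dsimp only at hcov'
        rw [huniq q' ⟨hq', by omega, by omega, hcov'.2.2⟩]

theorem Tiles.append_right {B : Finset (ℕ × ℕ)} {a1 a2 a2' : ℕ}
    (h : Tiles B a1 a2) (h' : Tiles B a1 a2') : Tiles B a1 (a2 + a2') := by
  simpa [image_image] using (h.transpose_s11.append_left h'.transpose_s11).transpose_s11

theorem tiling_square_r_plus_ac_general (a b c r : ℕ)
    (hbr : b ∣ r)
    (hx : ∃ x1 x2 : ℕ, r = x1 * a + x2 * c) :
    Tiles {(a, a), (b, b), (c, c)} (r + a * c) (r + a * c) := by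
  set B : Finset (ℕ × ℕ) := {(a, a), (b, b), (c, c)}
  have haB : (a, a) ∈ B := by simp [B]
  have hbB : (b, b) ∈ B := by simp [B]
  have hcB : (c, c) ∈ B := by simp [B]
  obtain ⟨k, rfl⟩ := hbr
  obtain ⟨x1, x2, hx⟩ := hx
  have corner : Tiles B (b * k) (b * k) := by
    simpa only [mul_comm k b] using tiles_mul_mul_of_mem hbB k k
  have square : Tiles B (a * c) (a * c) := by
    simpa only [mul_comm c a] using tiles_mul_mul_of_mem haB c c
  have wide : Tiles B (b * k) (a * c) := hx ▸
    ((mul_comm c a ▸ tiles_mul_mul_of_mem haB x1 c).append_left (tiles_mul_mul_of_mem hcB x2 a))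
  have tall : Tiles B (a * c) (b * k) := hx ▸
    ((mul_comm c a ▸ tiles_mul_mul_of_mem haB c x1).append_right (tiles_mul_mul_of_mem hcB a x2))
  exact (corner.append_right wide).append_left (tall.append_right square)

/-- if b ∣ r, r = x1*a + x2*c and L*c = y1*a + y2*b, then the
square of side r + a*c can be tiled with a×a, b×b and c×c squares. -/
theorem tiling_square_r_plus_ac (L a b c r : ℕ)
    (hL : 0 < L) (ha : 0 < a) (hb : 0 < b) (hc : 0 < c) (hr : 0 < r)
    (hbr : b ∣ r)
    (hx : ∃ x1 x2 : ℕ, r = x1 * a + x2 * c)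
    (hy : ∃ y1 y2 : ℕ, L * c = y1 * a + y2 * b) :
    Tiles {(a, a), (b, b), (c, c)} (r + a * c) (r + a * c) :=
  tiling_square_r_plus_ac_general a b c r hbr hx
end

section
/- Let p1 < p2 < p3 be primes. Every square (a × a) with a > 2*p1*p2*p3 - (p1*p2 + p1*p3 + p2*p3) can be tiled with squares (p1 × p1), (p2 × p2), and (p3 × p3). -/
namespace Tiles

variable {B : Finset (ℕ × ℕ)}

theorem zero_left (a2 : ℕ) : Tiles B 0 a2 :=
  ⟨∅, by simp, fun i _ hi => absurd hi i.not_lt_zero⟩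

theorem single {w l : ℕ} (h : (w, l) ∈ B) : Tiles B w l := by
  refine ⟨{(0, 0, w, l)}, by simpa using h, fun i j hi hj => ⟨(0, 0, w, l), ?_, ?_⟩⟩
  · simp [hi, hj]
  · simp

def transposePlacement : (ℕ × ℕ × ℕ × ℕ) ≃ (ℕ × ℕ × ℕ × ℕ) where
  toFun q := (q.2.1, q.1, q.2.2.2, q.2.2.1)
  invFun q := (q.2.1, q.1, q.2.2.2, q.2.2.1)
  left_inv _ := rfl
  right_inv _ := rfl

theorem transpose_s19 (hsymm : ∀ w l, (w, l) ∈ B → (l, w) ∈ B) {a1 a2 : ℕ} (h : Tiles B a1 a2) :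
    Tiles B a2 a1 := by
  obtain ⟨P, hsub, hcov⟩ := h
  refine ⟨P.map transposePlacement.toEmbedding, ?_, fun i j hi hj => ?_⟩
  · intro q hq
    rw [Finset.mem_map_equiv] at hq
    obtain ⟨hb, h1, h2⟩ := hsub _ hq
    exact ⟨hsymm _ _ hb, h2, h1⟩
  · refine (transposePlacement.existsUnique_congr fun q => ?_).1 (hcov j i hj hi)
    simp only [Finset.mem_map_equiv]
    constructor <;> rintro ⟨h, h1, h2, h3, h4⟩ <;> exact ⟨h, h3, h4, h1, h2⟩

theorem add_left {a1 b1 a2 : ℕ} (hl : Tiles B a1 a2) (hr : Tiles B b1 a2) :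
    Tiles B (a1 + b1) a2 := by
  obtain ⟨P, hPsub, hPcov⟩ := hl
  obtain ⟨Q, hQsub, hQcov⟩ := hr
  let shift : ℕ × ℕ × ℕ × ℕ → ℕ × ℕ × ℕ × ℕ := fun q => (a1 + q.1, q.2)
  refine ⟨P ∪ Q.image shift, ?_, fun i j hi hj => ?_⟩
  · simp only [Finset.mem_union, Finset.mem_image]
    rintro q (hq | ⟨r, hr, rfl⟩)
    · obtain ⟨hb, h1, h2⟩ := hPsub q hq
      exact ⟨hb, by omega, h2⟩
    · obtain ⟨hb, h1, h2⟩ := hQsub r hr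
      exact ⟨hb, by simp only [shift]; omega, h2⟩
  · rcases Nat.lt_or_ge i a1 with h | h
    · obtain ⟨q, hq, huniq⟩ := hPcov i j h hj
      refine ⟨q, ⟨Finset.mem_union_left _ hq.1, hq.2⟩, ?_⟩
      rintro q' ⟨hq', hc⟩
      rcases Finset.mem_union.1 hq' with hm | hm
      · exact huniq q' ⟨hm, hc⟩
      · obtain ⟨r, -, rfl⟩ := Finset.mem_image.1 hm
        simp only [shift] at hc
        omega
    · obtain ⟨q, hq, huniq⟩ := hQcov (i - a1) j (by omega) hj
      refine ⟨shift q, ⟨Finset.mem_union_right _ (Finset.mem_image_of_mem _ hq.1),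
        by simp only [shift]; omega⟩, ?_⟩
      rintro q' ⟨hq', hc⟩
      rcases Finset.mem_union.1 hq' with hm | hm
      · have := (hPsub q' hm).2.1
        omega
      · obtain ⟨r, hr, rfl⟩ := Finset.mem_image.1 hm
        simp only [shift] at hc
        rw [huniq r ⟨hr, by omega⟩]

theorem sum_left {ι : Type*} (s : Finset ι) (A : ι → ℕ) {a2 : ℕ}
    (h : ∀ i ∈ s, Tiles B (A i) a2) : Tiles B (∑ i ∈ s, A i) a2 := by
  classical
  induction s using Finset.induction_on with
  | empty => exact zero_left a2
  | insert i s hi ih =>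
    rw [Finset.sum_insert hi]
    exact add_left (h i (s.mem_insert_self i)) (ih fun j hj => h j (Finset.mem_insert_of_mem hj))

theorem sum_right (hsymm : ∀ w l, (w, l) ∈ B → (l, w) ∈ B) {ι : Type*} (s : Finset ι)
    (A : ι → ℕ) {a1 : ℕ} (h : ∀ i ∈ s, Tiles B a1 (A i)) : Tiles B a1 (∑ i ∈ s, A i) :=
  transpose_s19 hsymm (sum_left s A fun i hi => transpose_s19 hsymm (h i hi))

theorem of_dvd_s19 (hsymm : ∀ w l, (w, l) ∈ B → (l, w) ∈ B) {d a1 a2 : ℕ} (hd : (d, d) ∈ B)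
    (h1 : d ∣ a1) (h2 : d ∣ a2) : Tiles B a1 a2 := by
  obtain ⟨m, rfl⟩ := h1
  obtain ⟨n, rfl⟩ := h2
  simpa [mul_comm d] using
    sum_left (Finset.range m) (fun _ => d) fun _ _ =>
      sum_right hsymm (Finset.range n) (fun _ => d) fun _ _ => single hd

end Tiles

theorem Nat.exists_mul_add_mul_add_mul_eq_s19 {a b c N : ℕ} (ha : 0 < a) (hb : 0 < b) (hc : 0 < c)
    (hab : a.Coprime b) (hac : a.Coprime c) (hbc : b.Coprime c)
    (hN : 2 * a * b * c < N + (a * b + a * c + b * c)) :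
    ∃ x y z : ℕ, x * (b * c) + y * (a * c) + z * (a * b) = N := by
  -- Choose `z < c` with `c ∣ N - a b z`; the quotient `M` then lies above the Frobenius number
  -- `a b - a - b` of `{a, b}`.
  obtain ⟨z, hzc, hz⟩ := Nat.exists_mul_mod_eq_of_coprime N (Nat.Coprime.mul_left hac hbc) hc.ne'
  obtain ⟨M, hM⟩ : (c : ℤ) ∣ N - a * b * z := by exact_mod_cast Nat.modEq_iff_dvd.1 hz
  have hMlow : (a : ℤ) * b - a - b < M := by
    by_contra! hle
    have : (c : ℤ) * M ≤ c * (a * b - a - b) := by gcongr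
    have : (a : ℤ) * b * z ≤ a * b * (c - 1) := by gcongr; omega
    zify at hN
    nlinarith
  lift M to ℕ using by nlinarith
  obtain ⟨u, v, huv⟩ := Nat.exists_add_mul_eq_of_gcd_dvd_of_mul_pred_le a b M
    (by rw [hab.gcd_eq_one]; exact one_dvd M)
    (by rw [Nat.pred_eq_sub_one, Nat.pred_eq_sub_one]; zify [ha, hb]; linarith)
  refine ⟨v, u, z, ?_⟩
  zify at huv ⊢
  linear_combination (c : ℤ) * huv - hM

/-- for primes p1 < p2 < p3, every square with side greater than
2*p1*p2*p3 - (p1*p2 + p1*p3 + p2*p3) can be tiled with p1×p1, p2×p2 and p3×p3 squares. -/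
theorem tiling_square_three_primes (p1 p2 p3 : ℕ)
    (h1 : Nat.Prime p1) (h2 : Nat.Prime p2) (h3 : Nat.Prime p3)
    (h12 : p1 < p2) (h23 : p2 < p3) :
    ∀ a : ℕ, 2 * p1 * p2 * p3 - (p1 * p2 + p1 * p3 + p2 * p3) < a →
      Tiles {(p1, p1), (p2, p2), (p3, p3)} a a := by
  intro a ha
  set B : Finset (ℕ × ℕ) := {(p1, p1), (p2, p2), (p3, p3)}
  have hsymm : ∀ w l, (w, l) ∈ B → (l, w) ∈ B := by
    simp only [B, Finset.mem_insert, Finset.mem_singleton, Prod.mk.injEq]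
    tauto
  obtain ⟨x, y, z, hxyz⟩ := Nat.exists_mul_add_mul_add_mul_eq_s19 h1.pos h2.pos h3.pos
    ((Nat.coprime_primes h1 h2).2 h12.ne) ((Nat.coprime_primes h1 h3).2 (h12.trans h23).ne)
    ((Nat.coprime_primes h2 h3).2 h23.ne) (lt_add_of_tsub_lt_right ha)
  let p : Fin 3 → ℕ := ![p1, p2, p3]
  let A : Fin 3 → ℕ := ![x * (p2 * p3), y * (p1 * p3), z * (p1 * p2)]
  have hpB : ∀ k, (p k, p k) ∈ B := by
    intro k; fin_cases k <;> simp [B, p]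
  have hdvd : ∀ i k, k ≠ i → p k ∣ A i := by
    intro i k
    fin_cases i <;> fin_cases k <;> simp [A, p] <;> exact Dvd.dvd.mul_left (by simp) _
  have hblock : ∀ i j, Tiles B (A i) (A j) := by
    intro i j
    obtain ⟨k, hki, hkj⟩ : ∃ k, k ≠ i ∧ k ≠ j := by revert i j; decide
    exact Tiles.of_dvd_s19 hsymm (hpB k) (hdvd i k hki) (hdvd j k hkj)
  have hsum : ∑ i, A i = a := by simpa [A, Fin.sum_univ_three] using hxyz
  rw [← hsum]
  exact Tiles.sum_left _ _ fun i _ => Tiles.sum_right hsymm _ _ fun j _ => hblock i j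
end
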